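/- arXiv:1705.10306 — 5 statements merged into one kernel-verified Lean document; each statement's English description precedes it below -/
import Mathlib

section
/- Fix an integer K ≥ 1. Let p(·, y) : X → [0, ∞) be a measurable joint density with marginal likelihood p(y) = ∫ p(x, y) dμ(x) ∈ (0, ∞) and posterior density p(x|y) = p(x, y)/p(y), and let q(·|y) be a proposal probability density on X with q(x|y) > 0 whenever p(x, y) > 0. Assume x^{1:K} ↦ Q_IS(x^{1:K}) log Ẑ_IS(x^{1:K}) is μ^{⊗K}-integrable. Then ELBO_IS(y) := ∫_{X^K} Q_IS(x^{1:K}) log Ẑ_IS(x^{1:K}) dμ^{⊗K}(x^{1:K}) satisfies ELBO_IS(y) = log p(y) − KL(Q_IS‖P_IS), where P_IS(x^{1:K}) = (1/K) Σ_{k=1}^K p(x^k|y) ∏_{ℓ≠k} q(x^ℓ|y). -/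
open MeasureTheory Finset

/-!
Where `Q_IS > 0`, every `q(xᵏ|y)` is positive, so `∏_{ℓ≠k} q(xˡ|y) = Q_IS / q(xᵏ|y)` and hence
`P_IS = Q_IS · Ẑ_IS / p(y)`. Pointwise this gives `Q_IS log (Q_IS / P_IS) = Q_IS log p(y) - Q_IS log Ẑ_IS`,
and integrating against `μ^{⊗K}` with `∫ Q_IS = (∫ q)^K = 1` yields the identity.
-/

theorem Finset.sum_mul_prod_sdiff_singleton {ι 𝕜 : Type*} [DecidableEq ι] [Field 𝕜]
    (s : Finset ι) (a q : ι → 𝕜) (hq : ∀ k ∈ s, q k ≠ 0) :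
    ∑ k ∈ s, a k * ∏ l ∈ s \ {k}, q l = (∏ k ∈ s, q k) * ∑ k ∈ s, a k / q k := by
  rw [mul_sum]
  refine sum_congr rfl fun k hk => ?_
  rw [prod_eq_mul_prod_sdiff_singleton_of_mem hk]
  field_simp [hq k hk]

theorem mixture_eq_prod_mul_mean_div {ι : Type*} [Fintype ι] [DecidableEq ι]
    (n c : ℝ) (a q : ι → ℝ) (hq : ∀ k, q k ≠ 0) :
    n⁻¹ * ∑ k, (a k / c) * ∏ l ∈ univ \ {k}, q l = (∏ k, q k) * (n⁻¹ * ∑ k, a k / q k) / c := by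
  rw [sum_mul_prod_sdiff_singleton _ _ _ fun k _ => hq k]
  simp only [div_right_comm _ c, ← sum_div]
  ring

theorem prod_mul_log_prod_div_mixture {ι : Type*} [Fintype ι] [DecidableEq ι]
    (n c : ℝ) (a q : ι → ℝ) (hc : c ≠ 0)
    (hZ : ∏ k, q k ≠ 0 → n⁻¹ * ∑ k, a k / q k ≠ 0) :
    (∏ k, q k) * Real.log ((∏ k, q k) / (n⁻¹ * ∑ k, (a k / c) * ∏ l ∈ univ \ {k}, q l))
      = Real.log c * ∏ k, q k - (∏ k, q k) * Real.log (n⁻¹ * ∑ k, a k / q k) := by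
  by_cases hQ : ∏ k, q k = 0
  · simp [hQ]
  have hZ := hZ hQ
  have hratio : (∏ k, q k) / ((∏ k, q k) * (n⁻¹ * ∑ k, a k / q k) / c)
      = c / (n⁻¹ * ∑ k, a k / q k) := by
    field_simp
  rw [mixture_eq_prod_mul_mean_div _ _ _ _ (prod_ne_zero_iff.mp hQ · (mem_univ _)), hratio,
    Real.log_div hc hZ]
  ring

theorem elbo_is_eq_log_marginal_likelihood_sub_KL_general
    {X : Type*} [MeasurableSpace X] (μ : Measure X) [SigmaFinite μ]
    (K : ℕ)
    (p q : X → ℝ) (py : ℝ)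
    (hpy_pos : 0 < py)
    (hq_nonneg : ∀ x, 0 ≤ q x)
    (hq_norm : ∫ x, q x ∂μ = 1)
    (hint : Integrable
      (fun v : Fin K → X =>
        (∏ k : Fin K, q (v k)) * Real.log ((K : ℝ)⁻¹ * ∑ k : Fin K, p (v k) / q (v k)))
      (Measure.pi fun _ : Fin K => μ))
    (hsupp : ∀ᵐ v ∂(Measure.pi fun _ : Fin K => μ),
      0 < ∏ k : Fin K, q (v k) → 0 < (K : ℝ)⁻¹ * ∑ k : Fin K, p (v k) / q (v k)) :
    ∫ v : Fin K → X,
        (∏ k : Fin K, q (v k)) * Real.log ((K : ℝ)⁻¹ * ∑ k : Fin K, p (v k) / q (v k))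
        ∂(Measure.pi fun _ : Fin K => μ)
      = Real.log py
        - ∫ v : Fin K → X,
            (∏ k : Fin K, q (v k)) *
              Real.log ((∏ k : Fin K, q (v k)) /
                ((K : ℝ)⁻¹ * ∑ k : Fin K, (p (v k) / py) * ∏ l ∈ Finset.univ \ {k}, q (v l)))
            ∂(Measure.pi fun _ : Fin K => μ) := by
  have hq_int : Integrable q μ := .of_integral_ne_zero (by rw [hq_norm]; exact one_ne_zero)
  have hQ_int : Integrable (fun v : Fin K → X => ∏ k, q (v k)) (Measure.pi fun _ => μ) :=
    .fintype_prod fun _ => hq_int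
  have hQ_one : ∫ v : Fin K → X, ∏ k, q (v k) ∂(Measure.pi fun _ => μ) = 1 := by
    rw [integral_fintype_prod_eq_pow, hq_norm, one_pow]
  have hpointwise : ∀ᵐ v ∂(Measure.pi fun _ : Fin K => μ),
      (∏ k, q (v k)) * Real.log ((∏ k, q (v k)) /
          ((K : ℝ)⁻¹ * ∑ k, (p (v k) / py) * ∏ l ∈ univ \ {k}, q (v l)))
        = Real.log py * ∏ k, q (v k)
          - (∏ k, q (v k)) * Real.log ((K : ℝ)⁻¹ * ∑ k, p (v k) / q (v k)) := by
    filter_upwards [hsupp] with v hZ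
    refine prod_mul_log_prod_div_mixture _ _ _ _ hpy_pos.ne' fun hQ => (hZ ?_).ne'
    exact (prod_nonneg fun k _ => hq_nonneg (v k)).lt_of_ne' hQ
  rw [integral_congr_ae hpointwise, integral_sub (hQ_int.const_mul _) hint, integral_const_mul,
    hQ_one]
  ring

/-- **KL decomposition of the IWAE ELBO.**
Fix `K ≥ 1`.  Let `p = p(·, y)` be a measurable joint density with marginal likelihood
`py ∈ (0, ∞)` and posterior `p(x|y) = p x / py`, and `q = q(·|y)` a proposal probability
density with `q x > 0` whenever `p x > 0`.  Assume `Q_IS · log Ẑ_IS` is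
`μ^{⊗K}`-integrable (in particular, as this implies, `Ẑ_IS` is a.e. positive where `Q_IS`
is).  Then `ELBO_IS(y) = ∫ Q_IS log Ẑ_IS dμ^{⊗K} = log py - KL(Q_IS ‖ P_IS)`, where
`P_IS(x^{1:K}) = (1/K) ∑ₖ p(xᵏ|y) ∏_{ℓ≠k} q(xˡ|y)`. -/
theorem elbo_is_eq_log_marginal_likelihood_sub_KL
    {X : Type*} [MeasurableSpace X] (μ : Measure X) [SigmaFinite μ]
    (K : ℕ) (hK : 1 ≤ K)
    (p q : X → ℝ) (py : ℝ)
    (hp_meas : Measurable p) (hp_nonneg : ∀ x, 0 ≤ p x)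
    (hp_int : Integrable p μ)
    (hpy_def : ∫ x, p x ∂μ = py) (hpy_pos : 0 < py)
    (hq_meas : Measurable q) (hq_nonneg : ∀ x, 0 ≤ q x)
    (hq_norm : ∫ x, q x ∂μ = 1)
    (habs : ∀ x, 0 < p x → 0 < q x)
    (hint : Integrable
      (fun v : Fin K → X =>
        (∏ k : Fin K, q (v k)) * Real.log ((K : ℝ)⁻¹ * ∑ k : Fin K, p (v k) / q (v k)))
      (Measure.pi fun _ : Fin K => μ))
    (hsupp : ∀ᵐ v ∂(Measure.pi fun _ : Fin K => μ),
      0 < ∏ k : Fin K, q (v k) → 0 < (K : ℝ)⁻¹ * ∑ k : Fin K, p (v k) / q (v k)) :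
    ∫ v : Fin K → X,
        (∏ k : Fin K, q (v k)) * Real.log ((K : ℝ)⁻¹ * ∑ k : Fin K, p (v k) / q (v k))
        ∂(Measure.pi fun _ : Fin K => μ)
      = Real.log py
        - ∫ v : Fin K → X,
            (∏ k : Fin K, q (v k)) *
              Real.log ((∏ k : Fin K, q (v k)) /
                ((K : ℝ)⁻¹ * ∑ k : Fin K, (p (v k) / py) * ∏ l ∈ Finset.univ \ {k}, q (v l)))
            ∂(Measure.pi fun _ : Fin K => μ) :=
  elbo_is_eq_log_marginal_likelihood_sub_KL_general μ K p q py hpy_pos hq_nonneg hq_norm hint hsupp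
end

section
/- (Proposition 3.) Fix an integer K ≥ 1. Let p(·|y) and q(·|y) be probability densities on X with respect to μ. Define Q_IS(x^{1:K}) = ∏_{k=1}^K q(x^k|y) and P_IS(x^{1:K}) = (1/K) Σ_{k=1}^K p(x^k|y) ∏_{ℓ≠k} q(x^ℓ|y). Then Q_IS(x^{1:K}) = P_IS(x^{1:K}) for all x^{1:K} ∈ X^K if and only if q(x|y) = p(x|y) for all x ∈ X. -/
/-!
Since `q (x k) * ∏_{l ≠ k} q (x l) = Q_IS x`, we have
`K • (P_IS x - Q_IS x) = ∑ k, (p - q) (x k) * ∏_{l ≠ k} q (x l)`.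
As `∫ q = 1`, some `x₀` has `q x₀ ≠ 0`. The constant vector at `x₀` then gives `p x₀ = q x₀`,
and changing one of its coordinates to `x` leaves the single term `(p x - q x) * q x₀ ^ (K - 1)`.
-/

open MeasureTheory Finset

lemma sum_mul_prod_sdiff_singleton_eq {ι R : Type*} [Fintype ι] [DecidableEq ι] [CommRing R]
    (f g : ι → R) :
    ∑ k, f k * ∏ l ∈ univ \ {k}, g l
      = Fintype.card ι * ∏ k, g k + ∑ k, (f k - g k) * ∏ l ∈ univ \ {k}, g l := by
  have hg : ∀ k, g k * ∏ l ∈ univ \ {k}, g l = ∏ l, g l := fun k => by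
    rw [sdiff_singleton_eq_erase, mul_prod_erase _ _ (mem_univ k)]
  simp only [sub_mul, sum_sub_distrib, hg, sum_const, card_univ, nsmul_eq_mul]
  ring

lemma prod_eq_inv_card_mul_sum_iff {ι 𝕜 : Type*} [Fintype ι] [DecidableEq ι] [Field 𝕜]
    (hι : (Fintype.card ι : 𝕜) ≠ 0) (f g : ι → 𝕜) :
    ∏ k, g k = (Fintype.card ι : 𝕜)⁻¹ * ∑ k, f k * ∏ l ∈ univ \ {k}, g l
      ↔ ∑ k, (f k - g k) * ∏ l ∈ univ \ {k}, g l = 0 := by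
  rw [sum_mul_prod_sdiff_singleton_eq, mul_add, inv_mul_cancel_left₀ hι, left_eq_add,
    mul_eq_zero, or_iff_right (inv_ne_zero hι)]

lemma eq_of_forall_sum_sub_mul_prod_sdiff_singleton_eq_zero {ι X R : Type*} [Fintype ι]
    [DecidableEq ι] [CommRing R] [NoZeroDivisors R] (hι : (Fintype.card ι : R) ≠ 0)
    {p q : X → R} {x₀ : X} (hx₀ : q x₀ ≠ 0)
    (h : ∀ v : ι → X, ∑ k, (p (v k) - q (v k)) * ∏ l ∈ univ \ {k}, q (v l) = 0) (x : X) :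
    p x = q x := by
  have hpow : q x₀ ^ (Fintype.card ι - 1) ≠ 0 := pow_ne_zero _ hx₀
  have hcard : ∀ i : ι, #(univ \ {i}) = Fintype.card ι - 1 := fun i => by
    rw [card_sdiff_of_subset (subset_univ _), card_singleton, card_univ]
  have hp₀ : p x₀ = q x₀ := by
    simpa only [prod_const, hcard, sum_const, card_univ, nsmul_eq_mul, mul_eq_zero, hι,
      hpow, or_false, false_or, sub_eq_zero] using h fun _ => x₀
  obtain ⟨i⟩ : Nonempty ι := not_isEmpty_iff.mp fun _ => hι (by simp)
  set v := Function.update (fun _ => x₀) i x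
  have hsum := h v
  rw [sum_eq_single i (fun k _ hk => by simp [v, hk, hp₀]) (by simp),
    prod_congr rfl (g := fun _ => q x₀) (fun l hl => by simp_all [v]), prod_const, hcard,
    show v i = x from Function.update_self ..] at hsum
  exact sub_eq_zero.mp ((mul_eq_zero.mp hsum).resolve_right hpow)

theorem q_is_eq_p_is_iff_proposal_eq_posterior_general
    {X : Type*} [MeasurableSpace X] (μ : Measure X)
    (K : ℕ) (hK : 1 ≤ K)
    (p q : X → ℝ)
    (hq_norm : ∫ x, q x ∂μ = 1) :
    (∀ v : Fin K → X,
        ∏ k : Fin K, q (v k)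
          = (K : ℝ)⁻¹ * ∑ k : Fin K, p (v k) * ∏ l ∈ Finset.univ \ {k}, q (v l))
      ↔ ∀ x, q x = p x := by
  have hK' : (Fintype.card (Fin K) : ℝ) ≠ 0 := by simp; omega
  obtain ⟨x₀, hx₀⟩ : ∃ x₀, q x₀ ≠ 0 := by
    by_contra! h
    simp [h] at hq_norm
  have key (v : Fin K → X) := prod_eq_inv_card_mul_sum_iff hK' (fun k => p (v k))
    (fun k => q (v k))
  simp only [Fintype.card_fin] at key
  simp only [key]
  refine ⟨fun h x => (eq_of_forall_sum_sub_mul_prod_sdiff_singleton_eq_zero hK' hx₀ h x).symm,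
    fun h v => ?_⟩
  simp [h]

/-- **Proposition 3.**
Fix `K ≥ 1` and probability densities `p = p(·|y)` and `q = q(·|y)` on `X` w.r.t. `μ`.
With `Q_IS(x^{1:K}) = ∏ₖ q(xᵏ|y)` and
`P_IS(x^{1:K}) = (1/K) ∑ₖ p(xᵏ|y) ∏_{ℓ≠k} q(xˡ|y)`, we have `Q_IS = P_IS` everywhere on
`X^K` if and only if `q = p` everywhere on `X`. -/
theorem q_is_eq_p_is_iff_proposal_eq_posterior
    {X : Type*} [MeasurableSpace X] (μ : Measure X) [SigmaFinite μ]
    (K : ℕ) (hK : 1 ≤ K)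
    (p q : X → ℝ)
    (hp_meas : Measurable p) (hp_nonneg : ∀ x, 0 ≤ p x)
    (hp_norm : ∫ x, p x ∂μ = 1)
    (hq_meas : Measurable q) (hq_nonneg : ∀ x, 0 ≤ q x)
    (hq_norm : ∫ x, q x ∂μ = 1) :
    (∀ v : Fin K → X,
        ∏ k : Fin K, q (v k)
          = (K : ℝ)⁻¹ * ∑ k : Fin K, p (v k) * ∏ l ∈ Finset.univ \ {k}, q (v l))
      ↔ ∀ x, q x = p x :=
  q_is_eq_p_is_iff_proposal_eq_posterior_general μ K hK p q hq_norm
end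

section
/- (Lemma for Proposition 4: the SMC estimator being exactly constant forces constant incremental weights.) Fix integers T ≥ 1 and K ≥ 2, strictly positive unnormalized target densities γ_1, …, γ_T with normalizing constants Z_1, …, Z_T ∈ (0, ∞), and strictly positive normalized proposal densities q_1, …, q_T. Suppose that Ẑ_SMC(x_{1:T}^{1:K}, a_{1:T−1}^{1:K}) = Z_T for every particle configuration (x_{1:T}^{1:K}, a_{1:T−1}^{1:K}). Then for each t ∈ {1, …, T} the incremental weight function w_t is constant, i.e. w_t(x_{1:t}) = w_t(x'_{1:t}) for all x_{1:t}, x'_{1:t} ∈ X^t. -/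
open MeasureTheory Finset

noncomputable section

variable {X : Type*}

/-- Incremental weight functions: `w_1(x_1) = γ_1(x_1)/q_1(x_1)` and, for `t ≥ 2`,
`w_t(x_{1:t}) = γ_t(x_{1:t}) / (γ_{t-1}(x_{1:t-1}) q_t(x_{1:t}))`. -/
def incW (γ q : (t : ℕ) → (Fin t → X) → ℝ) : (t : ℕ) → (Fin t → X) → ℝ
  | 0, _ => 1
  | 1, v => γ 1 v / q 1 v
  | (t + 2), v => γ (t + 2) v / (γ (t + 1) (Fin.init v) * q (t + 2) v)

/-- Particle trajectories: `x̃_{1:1}^k = x_1^k` and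
`x̃_{1:t}^k = (x̃_{1:t-1}^{a_{t-1}^k}, x_t^k)`.  Here `x t k` denotes the particle
`x_{t+1}^k` and `a t k` denotes the ancestor index `a_{t+1}^k`. -/
def traj {K : ℕ} (x : ℕ → Fin K → X) (a : ℕ → Fin K → Fin K) :
    (t : ℕ) → Fin K → Fin t → X
  | 0, _ => Fin.elim0
  | 1, k => fun _ => x 0 k
  | (t + 2), k => Fin.snoc (traj x a (t + 1) (a t k)) (x (t + 1) k)

/-- SMC marginal likelihood estimator `Ẑ_SMC = ∏_{t=1}^T (1/K) ∑_k w_t^k`, where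
`w_t^k = w_t(x̃_{1:t}^k)`. -/
def smcZhat (γ q : (t : ℕ) → (Fin t → X) → ℝ) (T K : ℕ) (x : ℕ → Fin K → X)
    (a : ℕ → Fin K → Fin K) : ℝ :=
  ∏ t ∈ Finset.range T, ((K : ℝ)⁻¹ * ∑ k : Fin K, incW γ q (t + 1) (traj x a (t + 1) k))

/-- SMC sampling density
`Q_SMC = (∏_k q_1(x_1^k)) ∏_{t=2}^T ∏_k q_t(x̃_{1:t-1}^{a_{t-1}^k}, x_t^k) w̄_{t-1}^{a_{t-1}^k}`,
where `w̄_t^j = w_t^j / ∑_ℓ w_t^ℓ` are the normalized weights. -/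
def smcQ (γ q : (t : ℕ) → (Fin t → X) → ℝ) (T K : ℕ) (x : ℕ → Fin K → X)
    (a : ℕ → Fin K → Fin K) : ℝ :=
  (∏ k : Fin K, q 1 (traj x a 1 k)) *
    ∏ t ∈ Finset.range (T - 1), ∏ k : Fin K,
      q (t + 2) (traj x a (t + 2) k) *
        (incW γ q (t + 1) (traj x a (t + 1) (a t k)) /
          ∑ l : Fin K, incW γ q (t + 1) (traj x a (t + 1) l))

end

/-!
Let every particle keep its own index as ancestor, so that particle `k` simply follows a path
`p k`. If particle `0` follows `u` and all others follow `u'`, the `t`-th factor of `Ẑ_SMC` is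
the weighted arithmetic mean `K⁻¹ w_t(u) + (1 - K⁻¹) w_t(u')`, while the configurations in which
every particle follows `u` (resp. `u'`) give `∏ₜ w_t(u) = Z_T = ∏ₜ w_t(u')`. By weighted AM-GM each
mean factor dominates `w_t(u)^{K⁻¹} w_t(u')^{1 - K⁻¹}`, whose product over `t` is `Z_T` again,
so `K ≥ 2` and the equality case force `w_t(u) = w_t(u')` for every `t`.
-/

open Real in
theorem Finset.eq_of_prod_weighted_mean_eq {ι : Type*} {s : Finset ι} {a b : ι → ℝ}
    {w₁ w₂ : ℝ} (hw₁ : 0 < w₁) (hw₂ : 0 < w₂) (hw : w₁ + w₂ = 1)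
    (ha : ∀ i ∈ s, 0 < a i) (hb : ∀ i ∈ s, 0 < b i) (hab : ∏ i ∈ s, a i = ∏ i ∈ s, b i)
    (hmean : ∏ i ∈ s, (w₁ * a i + w₂ * b i) = ∏ i ∈ s, a i) :
    ∀ i ∈ s, a i = b i := by
  by_contra! ⟨i, hi, hne⟩
  have hgeom : ∏ j ∈ s, a j ^ w₁ * b j ^ w₂ = ∏ j ∈ s, a j := by
    rw [prod_mul_distrib, finsetProd_rpow s a (fun j hj => (ha j hj).le),
      finsetProd_rpow s b (fun j hj => (hb j hj).le), ← hab, ← rpow_add (prod_pos ha), hw,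
      rpow_one]
  have hlt : ∏ j ∈ s, a j ^ w₁ * b j ^ w₂ < ∏ j ∈ s, (w₁ * a j + w₂ * b j) :=
    prod_lt_prod (fun j hj => by have := ha j hj; have := hb j hj; positivity)
      (fun j hj => geom_mean_le_arith_mean2_weighted hw₁.le hw₂.le (ha j hj).le (hb j hj).le hw)
      ⟨i, hi, (geom_mean_lt_arith_mean2_weighted_iff_of_pos hw₁ hw₂ (ha i hi).le (hb i hi).le
        hw).2 hne⟩
  exact hlt.ne (hgeom.trans hmean.symm)

section SMC

variable {X : Type*}

theorem incW_pos {γ q : (t : ℕ) → (Fin t → X) → ℝ} {T : ℕ}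
    (hγ_pos : ∀ t, 1 ≤ t → t ≤ T → ∀ v, 0 < γ t v)
    (hq_pos : ∀ t, 1 ≤ t → t ≤ T → ∀ v, 0 < q t v) :
    ∀ t, 1 ≤ t → t ≤ T → ∀ v, 0 < incW γ q t v
  | 1, _, hT, v => div_pos (hγ_pos 1 le_rfl hT v) (hq_pos 1 le_rfl hT v)
  | t + 2, _, hT, v => div_pos (hγ_pos _ (by omega) hT v)
      (mul_pos (hγ_pos _ (by omega) (by omega) _) (hq_pos _ (by omega) hT v))

theorem traj_of_ancestor_id {K : ℕ} (p : Fin K → ℕ → X) :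
    ∀ t k, traj (fun s k => p k s) (fun _ => id) t k = fun i : Fin t => p k i
  | 0, _ => funext fun i => i.elim0
  | 1, k => funext fun i => by rw [Fin.fin_one_eq_zero i]; rfl
  | t + 2, k => by
    rw [traj, traj_of_ancestor_id p (t + 1)]
    funext i
    refine Fin.lastCases ?_ (fun j => ?_) i
    · rw [Fin.snoc_last, Fin.val_last]
    · rw [Fin.snoc_castSucc, Fin.val_castSucc]; rfl

theorem smcZhat_of_ancestor_id (γ q : (t : ℕ) → (Fin t → X) → ℝ) (T K : ℕ)
    (p : Fin K → ℕ → X) :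
    smcZhat γ q T K (fun s k => p k s) (fun _ => id) =
      ∏ t ∈ range T, ((K : ℝ)⁻¹ * ∑ k : Fin K, incW γ q (t + 1) fun i => p k i) := by
  simp only [smcZhat, traj_of_ancestor_id]

theorem smcZhat_two_groups (γ q : (t : ℕ) → (Fin t → X) → ℝ) (T K : ℕ) (k₀ : Fin K)
    (u u' : ℕ → X) :
    smcZhat γ q T K (fun s k => (if k = k₀ then u else u') s) (fun _ => id) =
      ∏ t ∈ range T, ((K : ℝ)⁻¹ * incW γ q (t + 1) (fun i => u i) +
        (1 - (K : ℝ)⁻¹) * incW γ q (t + 1) (fun i => u' i)) := by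
  rw [smcZhat_of_ancestor_id]
  refine prod_congr rfl fun t _ => ?_
  have hK : (K : ℝ) ≠ 0 := Nat.cast_ne_zero.2 k₀.pos.ne'
  simp only [apply_ite (fun m : ℕ → X => incW γ q (t + 1) fun i => m i), sum_ite, filter_eq',
    filter_ne', mem_univ, if_true, sum_const, card_singleton, card_erase_of_mem, card_univ,
    Fintype.card_fin, one_smul, nsmul_eq_mul, Nat.cast_sub k₀.pos, Nat.cast_one]
  field_simp

end SMC

theorem incW_constant_of_smcZhat_constant_general
    {X : Type*}
    (T K : ℕ) (hK : 2 ≤ K)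
    (γ q : (t : ℕ) → (Fin t → X) → ℝ) (Z : ℕ → ℝ)
    (hγ_pos : ∀ t, 1 ≤ t → t ≤ T → ∀ v, 0 < γ t v)
    (hq_pos : ∀ t, 1 ≤ t → t ≤ T → ∀ v, 0 < q t v)
    (hconst : ∀ (x : ℕ → Fin K → X) (a : ℕ → Fin K → Fin K),
      smcZhat γ q T K x a = Z T) :
    ∀ t, 1 ≤ t → t ≤ T → ∀ v v' : Fin t → X, incW γ q t v = incW γ q t v' := by
  let k₀ : Fin K := ⟨0, by omega⟩
  have hmean (u u' : ℕ → X) := (smcZhat_two_groups γ q T K k₀ u u').symm.trans (hconst _ _)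
  have hprod (u : ℕ → X) : ∏ t ∈ range T, incW γ q (t + 1) (fun i => u i) = Z T := by
    simpa only [← add_mul, add_sub_cancel, one_mul] using hmean u u
  have hK_inv : (K : ℝ)⁻¹ < 1 := inv_lt_one_of_one_lt₀ (by exact_mod_cast hK)
  have hpath (u u' : ℕ → X) : ∀ t ∈ range T,
      incW γ q (t + 1) (fun i => u i) = incW γ q (t + 1) (fun i => u' i) :=
    eq_of_prod_weighted_mean_eq (by positivity) (sub_pos.2 hK_inv) (add_sub_cancel _ _)
      (fun t ht => incW_pos hγ_pos hq_pos _ (by omega) (mem_range.1 ht) _)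
      (fun t ht => incW_pos hγ_pos hq_pos _ (by omega) (mem_range.1 ht) _)
      ((hprod u).trans (hprod u').symm) ((hmean u u').trans (hprod u).symm)
  rintro (_ | t) ht htT v v'
  · omega
  · have extend (w : Fin (t + 1) → X) : (fun i : Fin (t + 1) => Function.extend Fin.val w
        (fun _ => w 0) (i : ℕ)) = w := funext fun i => Fin.val_injective.extend_apply w _ i
    rw [← extend v, ← extend v']
    exact hpath _ _ t (mem_range.2 htT)

/-- **Lemma for Proposition 4 (forward direction): a constant SMC estimator forces constant
incremental weights.**  Fix `T ≥ 1`, `K ≥ 2`, strictly positive unnormalized targets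
`γ_1, …, γ_T` with normalizing constants `Z_1, …, Z_T ∈ (0, ∞)` and strictly positive
normalized proposals `q_1, …, q_T`.  If `Ẑ_SMC = Z_T` for every particle configuration,
then each incremental weight function `w_t` (`1 ≤ t ≤ T`) is constant. -/
theorem incW_constant_of_smcZhat_constant
    {X : Type*} [MeasurableSpace X] (μ : Measure X) [SigmaFinite μ]
    (T K : ℕ) (hT : 1 ≤ T) (hK : 2 ≤ K)
    (γ q : (t : ℕ) → (Fin t → X) → ℝ) (Z : ℕ → ℝ)
    (hγ_meas : ∀ t, 1 ≤ t → t ≤ T → Measurable (γ t))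
    (hγ_pos : ∀ t, 1 ≤ t → t ≤ T → ∀ v, 0 < γ t v)
    (hγ_int : ∀ t, 1 ≤ t → t ≤ T → Integrable (γ t) (Measure.pi fun _ : Fin t => μ))
    (hZ_def : ∀ t, 1 ≤ t → t ≤ T →
      ∫ v, γ t v ∂(Measure.pi fun _ : Fin t => μ) = Z t)
    (hZ_pos : ∀ t, 1 ≤ t → t ≤ T → 0 < Z t)
    (hq_meas : ∀ t, 1 ≤ t → t ≤ T → Measurable (q t))
    (hq_pos : ∀ t, 1 ≤ t → t ≤ T → ∀ v, 0 < q t v)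
    (hq_norm : ∀ t < T, ∀ vp : Fin t → X, ∫ y, q (t + 1) (Fin.snoc vp y) ∂μ = 1)
    (hconst : ∀ (x : ℕ → Fin K → X) (a : ℕ → Fin K → Fin K),
      smcZhat γ q T K x a = Z T) :
    ∀ t, 1 ≤ t → t ≤ T → ∀ v v' : Fin t → X, incW γ q t v = incW γ q t v' :=
  incW_constant_of_smcZhat_constant_general T K hK γ q Z hγ_pos hq_pos hconst
end

section
/- (Lemma for Proposition 4: constant incremental weights determine the normalizing-constant ratios, the marginal consistency of the targets, and the proposals.) Let t ∈ {2, …, T} and suppose there is a constant c ∈ (0, ∞) with w_t(x_{1:t}) = c for all x_{1:t} ∈ X^t, i.e. γ_t(x_{1:t}) = c · γ_{t−1}(x_{1:t−1}) · q_t(x_{1:t}) for all x_{1:t}. Then c = Z_t/Z_{t−1}, the normalized target π_{t−1} is the marginal of π_t in the sense that π_{t−1}(x_{1:t−1}) = ∫ π_t(x_{1:t−1}, x_t) dμ(x_t) for all x_{1:t−1}, and q_t(x_{1:t}) = π_t(x_{1:t})/π_{t−1}(x_{1:t−1}) for all x_{1:t}. Moreover, if w_1(x_1) = c_1 for all x_1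 with c_1 ∈ (0, ∞), then c_1 = Z_1 and q_1 = π_1. -/
open MeasureTheory Finset

/-!
A constant weight `c` means `γ_t v = c · γ_{t-1}(init v) · q_t v`. Integrating out the last
coordinate against the normalized kernel `q_t` gives the marginal `c · γ_{t-1}`, and Fubini then
gives `Z_t = c · Z_{t-1}`; the remaining identities are algebra. The case `t = 1` is the same
argument with `γ_0 ≡ 1` on the one-point space `X^0`. Since `x / 0 = 0`, `w_t = c ≠ 0` forces the
denominator of `w_t` to be nonzero, which is what licenses the divisions.
-/

section

variable {X : Type*} [MeasurableSpace X] (μ : Measure X)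

lemma integral_pi_fin_succ_eq_integral_integral_snoc [SigmaFinite μ] {E : Type*}
    [NormedAddCommGroup E] [NormedSpace ℝ E] {n : ℕ} (f : (Fin (n + 1) → X) → E)
    (hf : Integrable f (Measure.pi fun _ => μ)) :
    ∫ v, f v ∂(Measure.pi fun _ => μ)
      = ∫ vp, ∫ y, f (Fin.snoc vp y) ∂μ ∂(Measure.pi fun _ : Fin n => μ) := by
  let e := MeasurableEquiv.piFinSuccAbove (fun _ : Fin (n + 1) => X) (Fin.last n)
  have he : MeasurePreserving e.symm (μ.prod (Measure.pi fun _ : Fin n => μ))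
      (Measure.pi fun _ => μ) :=
    (measurePreserving_piFinSuccAbove (fun _ => μ) (Fin.last n)).symm
  have he_symm : ∀ p : X × (Fin n → X), e.symm p = Fin.snoc p.2 p.1 := fun p =>
    Fin.insertNth_last' p.1 p.2
  rw [← he.integral_comp', integral_prod_symm]
  · simp only [he_symm]
  · exact (he.integrable_comp_emb e.symm.measurableEmbedding).2 hf

variable {n : ℕ} {g k : (Fin (n + 1) → X) → ℝ} {p : (Fin n → X) → ℝ} {c : ℝ}

lemma integral_snoc_eq_of_eq_mul_kernel
    (hk : ∀ vp, ∫ y, k (Fin.snoc vp y) ∂μ = 1) (hg : ∀ v, g v = c * (p (Fin.init v) * k v))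
    (vp : Fin n → X) :
    ∫ y, g (Fin.snoc vp y) ∂μ = c * p vp := by
  simp only [hg, Fin.init_snoc, ← mul_assoc]
  rw [integral_const_mul, hk, mul_one]

lemma integral_pi_eq_of_eq_mul_kernel [SigmaFinite μ]
    (hk : ∀ vp, ∫ y, k (Fin.snoc vp y) ∂μ = 1) (hg : ∀ v, g v = c * (p (Fin.init v) * k v))
    (hg_int : Integrable g (Measure.pi fun _ => μ)) :
    ∫ v, g v ∂(Measure.pi fun _ => μ) = c * ∫ v, p v ∂(Measure.pi fun _ => μ) := by
  rw [integral_pi_fin_succ_eq_integral_integral_snoc μ g hg_int,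
    ← integral_const_mul]
  exact integral_congr_ae (.of_forall (integral_snoc_eq_of_eq_mul_kernel μ hk hg))

end

lemma ne_zero_and_eq_mul_of_div_eq {K : Type*} [DivisionRing K] {a b c : K}
    (h : a / b = c) (hc : c ≠ 0) : b ≠ 0 ∧ a = c * b := by
  have hb : b ≠ 0 := (div_ne_zero_iff.1 (h ▸ hc)).2
  exact ⟨hb, (div_eq_iff hb).1 h⟩

theorem constant_weight_determines_targets_and_proposals_general
    {X : Type*} [MeasurableSpace X] (μ : Measure X) [SigmaFinite μ]
    (T : ℕ)
    (γ q : (t : ℕ) → (Fin t → X) → ℝ) (Z : ℕ → ℝ)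
    (hγ_int : ∀ t, 1 ≤ t → t ≤ T → Integrable (γ t) (Measure.pi fun _ : Fin t => μ))
    (hZ_def : ∀ t, 1 ≤ t → t ≤ T →
      ∫ v, γ t v ∂(Measure.pi fun _ : Fin t => μ) = Z t)
    (hZ_pos : ∀ t, 1 ≤ t → t ≤ T → 0 < Z t)
    (hq_norm : ∀ t < T, ∀ vp : Fin t → X, ∫ y, q (t + 1) (Fin.snoc vp y) ∂μ = 1)
    (t : ℕ) (ht : t + 2 ≤ T) (c : ℝ) (hc : 0 < c)
    (hw : ∀ v : Fin (t + 2) → X, incW γ q (t + 2) v = c) :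
    c = Z (t + 2) / Z (t + 1) ∧
      (∀ vp : Fin (t + 1) → X,
        γ (t + 1) vp / Z (t + 1)
          = ∫ y, γ (t + 2) (Fin.snoc vp y) / Z (t + 2) ∂μ) ∧
      (∀ v : Fin (t + 2) → X,
        q (t + 2) v
          = (γ (t + 2) v / Z (t + 2)) / (γ (t + 1) (Fin.init v) / Z (t + 1))) ∧
      (∀ c₁ : ℝ, 0 < c₁ → (∀ v : Fin 1 → X, incW γ q 1 v = c₁) →
        c₁ = Z 1 ∧ ∀ v : Fin 1 → X, q 1 v = γ 1 v / Z 1) := by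
  have hfac v := ne_zero_and_eq_mul_of_div_eq (hw v) hc.ne'
  have hq := hq_norm (t + 1) (by omega)
  have hZ : Z (t + 2) = c * Z (t + 1) := by
    rw [← hZ_def _ (by omega) ht, ← hZ_def _ (by omega) (by omega)]
    exact integral_pi_eq_of_eq_mul_kernel μ hq (fun v => (hfac v).2) (hγ_int _ (by omega) ht)
  have hZ₁ : Z (t + 1) ≠ 0 := (hZ_pos _ (by omega) (by omega)).ne'
  refine ⟨by rw [hZ, mul_div_cancel_right₀ _ hZ₁], fun vp => ?_, fun v => ?_,
    fun c₁ hc₁ hw₁ => ?_⟩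
  · rw [integral_div, integral_snoc_eq_of_eq_mul_kernel μ hq (fun v => (hfac v).2), hZ,
      mul_div_mul_left _ _ hc.ne']
  · obtain ⟨hden, hγ⟩ := hfac v
    rw [hγ, hZ]
    field_simp [left_ne_zero_of_mul hden]
  · have hfac₁ v := ne_zero_and_eq_mul_of_div_eq (hw₁ v) hc₁.ne'
    have hZ1 : Z 1 = c₁ := by
      rw [← hZ_def 1 le_rfl (by omega),
        integral_pi_eq_of_eq_mul_kernel μ (c := c₁) (p := fun _ => 1) (hq_norm 0 (by omega)) (fun v => by rw [one_mul]; exact (hfac₁ v).2)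
        (hγ_int 1 le_rfl (by omega)), Measure.pi_of_empty, integral_dirac, mul_one]
    refine ⟨hZ1.symm, fun v => ?_⟩
    rw [hZ1, (hfac₁ v).2, mul_div_cancel_left₀ _ hc₁.ne']

/-- **Lemma for Proposition 4: constant incremental weights determine the
normalizing-constant ratios, the marginal consistency of the targets, and the proposals.**
If, for some `t` with `2 ≤ t ≤ T` (written `t + 2` below with `t + 2 ≤ T`) there is a
constant `c ∈ (0, ∞)` with `w_{t+2} ≡ c`, equivalently
`γ_{t+2}(x_{1:t+2}) = c · γ_{t+1}(x_{1:t+1}) · q_{t+2}(x_{1:t+2})` for all `x_{1:t+2}`,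
then `c = Z_{t+2}/Z_{t+1}`, the normalized target `π_{t+1} = γ_{t+1}/Z_{t+1}` is the
marginal of `π_{t+2} = γ_{t+2}/Z_{t+2}`, and
`q_{t+2} = π_{t+2}(x_{1:t+2})/π_{t+1}(x_{1:t+1})`.  Moreover, if `w_1 ≡ c₁ ∈ (0, ∞)` then
`c₁ = Z_1` and `q_1 = π_1 = γ_1/Z_1`. -/
theorem constant_weight_determines_targets_and_proposals
    {X : Type*} [MeasurableSpace X] (μ : Measure X) [SigmaFinite μ]
    (T : ℕ) (hT : 1 ≤ T)
    (γ q : (t : ℕ) → (Fin t → X) → ℝ) (Z : ℕ → ℝ)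
    (hγ_meas : ∀ t, 1 ≤ t → t ≤ T → Measurable (γ t))
    (hγ_pos : ∀ t, 1 ≤ t → t ≤ T → ∀ v, 0 < γ t v)
    (hγ_int : ∀ t, 1 ≤ t → t ≤ T → Integrable (γ t) (Measure.pi fun _ : Fin t => μ))
    (hZ_def : ∀ t, 1 ≤ t → t ≤ T →
      ∫ v, γ t v ∂(Measure.pi fun _ : Fin t => μ) = Z t)
    (hZ_pos : ∀ t, 1 ≤ t → t ≤ T → 0 < Z t)
    (hq_meas : ∀ t, 1 ≤ t → t ≤ T → Measurable (q t))
    (hq_pos : ∀ t, 1 ≤ t → t ≤ T → ∀ v, 0 < q t v)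
    (hq_norm : ∀ t < T, ∀ vp : Fin t → X, ∫ y, q (t + 1) (Fin.snoc vp y) ∂μ = 1)
    (t : ℕ) (ht : t + 2 ≤ T) (c : ℝ) (hc : 0 < c)
    (hw : ∀ v : Fin (t + 2) → X, incW γ q (t + 2) v = c) :
    c = Z (t + 2) / Z (t + 1) ∧
      (∀ vp : Fin (t + 1) → X,
        γ (t + 1) vp / Z (t + 1)
          = ∫ y, γ (t + 2) (Fin.snoc vp y) / Z (t + 2) ∂μ) ∧
      (∀ v : Fin (t + 2) → X,
        q (t + 2) v
          = (γ (t + 2) v / Z (t + 2)) / (γ (t + 1) (Fin.init v) / Z (t + 1))) ∧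
      (∀ c₁ : ℝ, 0 < c₁ → (∀ v : Fin 1 → X, incW γ q 1 v = c₁) →
        c₁ = Z 1 ∧ ∀ v : Fin 1 → X, q 1 v = γ 1 v / Z 1) :=
  constant_weight_determines_targets_and_proposals_general μ T γ q Z hγ_int hZ_def hZ_pos hq_norm t
    ht c hc hw
end

section
/- (KL decomposition of the SMC evidence lower bound.) Fix integers T ≥ 1 and K ≥ 1, strictly positive unnormalized target densities γ_1, …, γ_T with normalizing constants Z_1, …, Z_T ∈ (0, ∞), and strictly positive normalized proposal densities q_1, …, q_T. Assume (x, a) ↦ Q_SMC(x, a) log Ẑ_SMC(x, a) is integrable with respect to μ^{⊗TK} ⊗ counting measure. Define P_SMC(x, a) = Q_SMC(x, a) · Ẑ_SMC(x, a)/Z_T. Then P_SMC is a probability density on X^{T×K} × {1, …, K}^{(T−1)×K} with respect to μ^{⊗TK} ⊗ counting measure, and ELBO_SMC := Σ_a ∫ Q_SMC(x, a) log Ẑ_SMC(x, a) dμ^{⊗TK}(x) = log Z_T − KL(Q_SMC‖P_SMC). -/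
open MeasureTheory Finset

/-- Extend a particle array `Fin T → Fin K → X` to `ℕ → Fin K → X`; the values beyond time
`T` are irrelevant to `smcQ` and `smcZhat`. -/
def extX {X : Type*} {T K : ℕ} (hT : 0 < T) (xf : Fin T → Fin K → X) : ℕ → Fin K → X :=
  fun t k => if h : t < T then xf ⟨t, h⟩ k else xf ⟨0, hT⟩ k

/-- Extend an ancestor-index array `Fin (T-1) → Fin K → Fin K` to `ℕ → Fin K → Fin K`; the
values beyond time `T - 1` are irrelevant to `smcQ` and `smcZhat`. -/
def extA {T K : ℕ} (af : Fin (T - 1) → Fin K → Fin K) : ℕ → Fin K → Fin K :=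
  fun t k => if h : t < T - 1 then af ⟨t, h⟩ k else k

/-!
The heart of the matter is unbiasedness, `∑_a ∫ Q_SMC Ẑ_SMC = Z_T`. It is proved by induction
on time in the stronger form: for every test function `f`,
`∑_a ∫ Q_SMC · Ẑ_{t-1} · (1/K) ∑_k w_t^k f(x̃_{1:t}^k) = ∫ γ_t f`.
Integrating out the last layer of ancestors and particles, `Q_SMC` factors into the previous
`Q_SMC` times a product of independent resample-move densities, under which the weighted particle
average at time `t + 1` becomes the normalized-weight average at time `t` of
`u ↦ ∫ γ_{t+1}(u, z) / γ_t(u) f(u, z) dz`; the normalizing factor `(1/K) ∑_l w_t^l` is exactly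
the last factor of `Ẑ_t`. The same factorization shows that `Q_SMC` has total mass one. So
`P_SMC = Q_SMC Ẑ_SMC / Z_T` is a probability density, and integrating
`log (Q_SMC / P_SMC) = log Z_T - log Ẑ_SMC` against `Q_SMC` gives the KL decomposition.
-/

open scoped ENNReal

section PiFin

variable {Y : Type*} [MeasurableSpace Y]

theorem measurable_fin_snoc {n : ℕ} :
    Measurable fun p : (Fin n → Y) × Y => (Fin.snoc p.1 p.2 : Fin (n + 1) → Y) := by
  refine measurable_pi_lambda _ fun i => ?_
  induction i using Fin.lastCases with
  | last => simpa using measurable_snd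
  | cast i =>
    simp only [Fin.snoc_castSucc]
    exact (measurable_pi_apply i).comp measurable_fst

theorem measurable_fin_snoc_right {n : ℕ} (v : Fin n → Y) :
    Measurable fun z : Y => (Fin.snoc v z : Fin (n + 1) → Y) :=
  measurable_fin_snoc.comp (measurable_const.prodMk measurable_id)

theorem lintegral_pi_fin_snoc (m : Measure Y) [SigmaFinite m] {n : ℕ}
    {F : (Fin (n + 1) → Y) → ℝ≥0∞} (hF : Measurable F) :
    ∫⁻ u, F u ∂Measure.pi (fun _ => m)
      = ∫⁻ v, ∫⁻ y, F (Fin.snoc v y) ∂m ∂Measure.pi (fun _ => m) := by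
  have he := (measurePreserving_piFinSuccAbove (fun _ : Fin (n + 1) => m) (Fin.last n)).symm
  rw [← he.lintegral_comp hF]
  refine (lintegral_prod_symm _ (hF.comp he.measurable).aemeasurable).trans ?_
  simp [MeasurableEquiv.piFinSuccAbove_symm_apply, Fin.snocEquiv]

theorem lintegral_pi_fin_one (m : Measure Y) [SigmaFinite m] {F : (Fin 1 → Y) → ℝ≥0∞}
    (hF : Measurable F) :
    ∫⁻ u, F u ∂Measure.pi (fun _ => m) = ∫⁻ y, F (fun _ => y) ∂m :=
  ((measurePreserving_funUnique m (Fin 1)).symm.lintegral_comp hF).symm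

theorem lintegral_pi_fin_prod (m : Measure Y) [SigmaFinite m] :
    ∀ {n : ℕ} {g : Fin n → Y → ℝ≥0∞}, (∀ i, Measurable (g i)) →
      ∫⁻ u, ∏ i, g i (u i) ∂Measure.pi (fun _ => m) = ∏ i, ∫⁻ y, g i y ∂m
  | 0, g, _ => by simp
  | n + 1, g, hg => by
    have hprod : ∀ {k} (h : Fin k → Y → ℝ≥0∞), (∀ i, Measurable (h i)) →
        Measurable fun u : Fin k → Y => ∏ i, h i (u i) := fun h hh =>
      Finset.measurable_prod _ fun i _ => (hh i).comp (measurable_pi_apply i)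
    rw [lintegral_pi_fin_snoc m (hprod g hg)]
    simp_rw [Fin.prod_univ_castSucc, Fin.snoc_castSucc, Fin.snoc_last,
      lintegral_const_mul _ (hg _)]
    rw [lintegral_mul_const _ (hprod _ fun i => hg i.castSucc),
      lintegral_pi_fin_prod m fun i => hg i.castSucc]

end PiFin

theorem Fintype.sum_pi_fin_snoc {κ M : Type*} [Fintype κ] [DecidableEq κ] [AddCommMonoid M]
    {n : ℕ} (G : (Fin (n + 1) → κ) → M) :
    ∑ a, G a = ∑ a : Fin n → κ, ∑ b : κ, G (Fin.snoc a b) := by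
  rw [← (Fin.snocEquiv fun _ => κ).sum_comp, Fintype.sum_prod_type, Finset.sum_comm]
  rfl

section ProductKernel

variable {Y : Type*} [MeasurableSpace Y] (m : Measure Y) [SigmaFinite m] {K : ℕ}

theorem ENNReal.inv_natCast_mul_sum_const (hK : K ≠ 0) (c : ℝ≥0∞) :
    (K : ℝ≥0∞)⁻¹ * ∑ _k : Fin K, c = c := by
  rw [Finset.sum_const, Finset.card_univ, Fintype.card_fin, nsmul_eq_mul, ← mul_assoc,
    ENNReal.inv_mul_cancel (by exact_mod_cast hK) (ENNReal.natCast_ne_top K), one_mul]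

theorem Finset.prod_mul_apply_eq_prod_ite {ι R : Type*} [Fintype ι] [DecidableEq ι]
    [CommMonoid R] (f g : ι → R) (k : ι) :
    (∏ j, f j) * g k = ∏ j, f j * (if j = k then g j else 1) := by
  rw [Finset.prod_mul_distrib, Finset.prod_ite_eq' Finset.univ k g, if_pos (Finset.mem_univ k)]

variable {ι : Type*} [Fintype ι]

theorem sum_lintegral_pi_prod {M : Fin K → ι → Y → ℝ≥0∞}
    (hM : ∀ k a, Measurable (M k a)) :
    ∑ b : Fin K → ι, ∫⁻ y, ∏ k, M k (b k) (y k) ∂Measure.pi (fun _ => m)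
      = ∏ k, ∑ a, ∫⁻ z, M k a z ∂m := by
  rw [Fintype.prod_sum]
  exact Finset.sum_congr rfl fun b _ => lintegral_pi_fin_prod m fun k => hM k (b k)

theorem sum_lintegral_pi_prod_mul_apply {M φ : ι → Y → ℝ≥0∞}
    (hM : ∀ a, Measurable (M a)) (hφ : ∀ a, Measurable (φ a))
    (hM1 : ∑ a, ∫⁻ z, M a z ∂m = 1) (k : Fin K) :
    ∑ b : Fin K → ι, ∫⁻ y, (∏ j, M (b j) (y j)) * φ (b k) (y k)
        ∂Measure.pi (fun _ => m)
      = ∑ a, ∫⁻ z, M a z * φ a z ∂m := calc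
  _ = ∑ b : Fin K → ι, ∫⁻ y, ∏ j, M (b j) (y j) * (if j = k then φ (b j) (y j) else 1)
        ∂Measure.pi (fun _ => m) :=
    Finset.sum_congr rfl fun b _ =>
      lintegral_congr fun y => Finset.prod_mul_apply_eq_prod_ite _ _ k
  _ = ∏ j, ∑ a, ∫⁻ z, M a z * (if j = k then φ a z else 1) ∂m :=
    sum_lintegral_pi_prod m (M := fun j a z => M a z * (if j = k then φ a z else 1))
      fun j a => (hM a).mul (Measurable.ite (.const _) (hφ a) measurable_const)
  _ = ∏ j, if j = k then ∑ a, ∫⁻ z, M a z * φ a z ∂m else 1 :=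
    Finset.prod_congr rfl fun j _ => by split_ifs <;> simp [hM1]
  _ = _ := by simp

theorem sum_lintegral_pi_prod_mul_mean {M φ : ι → Y → ℝ≥0∞}
    (hM : ∀ a, Measurable (M a)) (hφ : ∀ a, Measurable (φ a))
    (hM1 : ∑ a, ∫⁻ z, M a z ∂m = 1) (hK : K ≠ 0) :
    ∑ b : Fin K → ι, ∫⁻ y, (∏ j, M (b j) (y j)) *
        ((K : ℝ≥0∞)⁻¹ * ∑ k, φ (b k) (y k)) ∂Measure.pi (fun _ => m)
      = ∑ a, ∫⁻ z, M a z * φ a z ∂m := by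
  have hmeas : ∀ (b : Fin K → ι) (k : Fin K),
      Measurable fun y : Fin K → Y => (∏ j, M (b j) (y j)) * φ (b k) (y k) :=
    fun b k => (Finset.measurable_prod _ fun j _ => (hM _).comp (measurable_pi_apply j)).mul
      ((hφ _).comp (measurable_pi_apply k))
  calc _ = ∑ b : Fin K → ι, (K : ℝ≥0∞)⁻¹ *
          ∑ k, ∫⁻ y, (∏ j, M (b j) (y j)) * φ (b k) (y k) ∂Measure.pi (fun _ => m) := by
        refine Finset.sum_congr rfl fun b _ => ?_
        rw [← lintegral_finsetSum _ fun k _ => hmeas b k,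
          ← lintegral_const_mul' _ _ (ENNReal.inv_ne_top.2 (by exact_mod_cast hK))]
        refine lintegral_congr fun y => ?_
        simp_rw [Finset.mul_sum]
        exact Finset.sum_congr rfl fun k _ => mul_left_comm _ _ _
    _ = (K : ℝ≥0∞)⁻¹ * ∑ _k : Fin K, ∑ a, ∫⁻ z, M a z * φ a z ∂m := by
      rw [← Finset.mul_sum, Finset.sum_comm]
      simp_rw [sum_lintegral_pi_prod_mul_apply m hM hφ hM1]
    _ = _ := ENNReal.inv_natCast_mul_sum_const hK _

theorem lintegral_pi_prod_mul_mean {g φ : Y → ℝ≥0∞} (hg : Measurable g)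
    (hφ : Measurable φ) (hg1 : ∫⁻ z, g z ∂m = 1) (hK : K ≠ 0) :
    ∫⁻ y : Fin K → Y, (∏ j, g (y j)) * ((K : ℝ≥0∞)⁻¹ * ∑ k, φ (y k))
        ∂Measure.pi (fun _ => m)
      = ∫⁻ z, g z * φ z ∂m := by
  simpa using sum_lintegral_pi_prod_mul_mean m (ι := Unit) (M := fun _ => g) (φ := fun _ => φ)
    (fun _ => hg) (fun _ => hφ) (by simpa using hg1) hK

end ProductKernel

theorem MeasureTheory.integrable_and_sum_integral_eq_of_sum_lintegral_ofReal
    {α ι : Type*} [MeasurableSpace α] {μ : Measure α} [Fintype ι] {f : ι → α → ℝ}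
    (hf0 : ∀ i x, 0 ≤ f i x) (hfm : ∀ i, AEStronglyMeasurable (f i) μ) {c : ℝ}
    (hc : 0 ≤ c)
    (h : ∑ i, ∫⁻ x, ENNReal.ofReal (f i x) ∂μ = ENNReal.ofReal c) :
    (∀ i, Integrable (f i) μ) ∧ ∑ i, ∫ x, f i x ∂μ = c := by
  have hfin : ∀ i, ∫⁻ x, ENNReal.ofReal (f i x) ∂μ ≠ ⊤ := fun i =>
    ne_top_of_le_ne_top (h ▸ ENNReal.ofReal_ne_top)
      (Finset.single_le_sum (f := fun j => ∫⁻ x, ENNReal.ofReal (f j x) ∂μ)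
        (fun j _ => zero_le) (Finset.mem_univ i))
  refine ⟨fun i => (lintegral_ofReal_ne_top_iff_integrable (hfm i)
    (ae_of_all _ (hf0 i))).1 (hfin i), ?_⟩
  simp_rw [integral_eq_lintegral_of_nonneg_ae (ae_of_all _ (hf0 _)) (hfm _)]
  rw [← ENNReal.toReal_sum fun i _ => hfin i, h, ENNReal.toReal_ofReal hc]

theorem Real.mul_log_div_mul_div {z c : ℝ} (hz : z ≠ 0) (hc : c ≠ 0) (p : ℝ) :
    p * Real.log (p / (p * z / c)) = p * Real.log c - p * Real.log z := by
  rcases eq_or_ne p 0 with rfl | hp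
  · simp
  rw [div_div_eq_mul_div, mul_div_mul_left _ _ hp, Real.log_div hc hz, mul_sub]

theorem MeasureTheory.sum_integral_mul_log_eq_log_sub_sum_integral_mul_log_div
    {α ι : Type*} [MeasurableSpace α] {μ : Measure α} [Fintype ι] {Q W : ι → α → ℝ}
    (hW : ∀ i x, W i x ≠ 0) {c : ℝ} (hc : c ≠ 0) (hQ : ∀ i, Integrable (Q i) μ)
    (hQW : ∀ i, Integrable (fun x => Q i x * Real.log (W i x)) μ)
    (hQ1 : ∑ i, ∫ x, Q i x ∂μ = 1) :
    ∑ i, ∫ x, Q i x * Real.log (W i x) ∂μ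
      = Real.log c - ∑ i, ∫ x, Q i x * Real.log (Q i x / (Q i x * W i x / c)) ∂μ := by
  simp_rw [Real.mul_log_div_mul_div (hW _ _) hc]
  rw [Finset.sum_congr rfl fun i _ => integral_sub ((hQ i).mul_const _) (hQW i)]
  simp_rw [integral_mul_const]
  rw [Finset.sum_sub_distrib, ← Finset.sum_mul, hQ1, one_mul, sub_sub_cancel]

namespace SMC

variable {X : Type*} {T K : ℕ} {γ q : (t : ℕ) → (Fin t → X) → ℝ}

def PosUpTo (T : ℕ) (f : (t : ℕ) → (Fin t → X) → ℝ) : Prop :=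
  ∀ t, 1 ≤ t → t ≤ T → ∀ v, 0 < f t v

def MeasurableUpTo [MeasurableSpace X] (T : ℕ) (f : (t : ℕ) → (Fin t → X) → ℝ) : Prop :=
  ∀ t, 1 ≤ t → t ≤ T → Measurable (f t)

variable (γ q) in
noncomputable def weight (t : ℕ) (v : Fin t → X) : ℝ≥0∞ := ENNReal.ofReal (incW γ q t v)

theorem incW_pos (hγ : PosUpTo T γ) (hq : PosUpTo T q) : PosUpTo T (incW γ q) := by
  intro t h1 hT v
  match t, h1 with
  | 1, _ => exact div_pos (hγ 1 le_rfl hT v) (hq 1 le_rfl hT v)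
  | t + 2, _ =>
    exact div_pos (hγ _ (by omega) hT v)
      (mul_pos (hγ _ (by omega) (by omega) _) (hq _ (by omega) hT v))

theorem sum_incW_pos (hγ : PosUpTo T γ) (hq : PosUpTo T q) (hK : K ≠ 0) {t : ℕ} (h1 : 1 ≤ t)
    (hT : t ≤ T) (τ : Fin K → Fin t → X) : 0 < ∑ l, incW γ q t (τ l) :=
  Finset.sum_pos (fun l _ => incW_pos hγ hq t h1 hT (τ l))
    ⟨⟨0, Nat.pos_of_ne_zero hK⟩, Finset.mem_univ _⟩

theorem sum_weight_ne_zero (hγ : PosUpTo T γ) (hq : PosUpTo T q) (hK : K ≠ 0) {t : ℕ}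
    (h1 : 1 ≤ t) (hT : t ≤ T) (τ : Fin K → Fin t → X) :
    ∑ l, weight γ q t (τ l) ≠ 0 := by
  simp only [weight]
  rw [← ENNReal.ofReal_sum_of_nonneg fun l _ => (incW_pos hγ hq t h1 hT (τ l)).le]
  exact (ENNReal.ofReal_pos.2 (sum_incW_pos hγ hq hK h1 hT τ)).ne'

theorem sum_weight_ne_top {t : ℕ} (τ : Fin K → Fin t → X) :
    ∑ l, weight γ q t (τ l) ≠ ⊤ :=
  ENNReal.sum_ne_top.2 fun _ _ => ENNReal.ofReal_ne_top

theorem smcQ_nonneg (hγ : PosUpTo T γ) (hq : PosUpTo T q) {n : ℕ} (hn : n + 1 ≤ T)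
    (x : ℕ → Fin K → X) (a : ℕ → Fin K → Fin K) : 0 ≤ smcQ γ q (n + 1) K x a := by
  refine mul_nonneg (Finset.prod_nonneg fun k _ => (hq 1 le_rfl (by omega) _).le)
    (Finset.prod_nonneg fun t ht => Finset.prod_nonneg fun k _ => ?_)
  have ht : t + 2 ≤ T := by have := Finset.mem_range.1 ht; omega
  exact mul_nonneg (hq _ (by omega) ht _).le
    (div_nonneg (incW_pos hγ hq _ (by omega) (by omega) _).le
      (Finset.sum_nonneg fun l _ => (incW_pos hγ hq _ (by omega) (by omega) _).le))

theorem smcZhat_pos (hγ : PosUpTo T γ) (hq : PosUpTo T q) (hK : K ≠ 0) {m : ℕ} (hm : m ≤ T)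
    (x : ℕ → Fin K → X) (a : ℕ → Fin K → Fin K) : 0 < smcZhat γ q m K x a :=
  Finset.prod_pos fun t ht => mul_pos (by positivity)
    (sum_incW_pos hγ hq hK (by omega) (by have := Finset.mem_range.1 ht; omega) _)

variable (γ q) in
/-- Density of one resample-move step: ancestor `a` is drawn among the trajectories `τ` with its
normalized weight and extended by a new particle `z` drawn from the proposal. -/
noncomputable def resampleMove {n : ℕ} (τ : Fin K → Fin (n + 1) → X) (a : Fin K) (z : X) :
    ℝ≥0∞ :=
  ENNReal.ofReal (q (n + 2) (Fin.snoc (τ a) z)) *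
    (weight γ q (n + 1) (τ a) / ∑ l, weight γ q (n + 1) (τ l))

theorem ofReal_smcQ_one (hq : PosUpTo T q) (hT : 1 ≤ T) (x : ℕ → Fin K → X)
    (a : ℕ → Fin K → Fin K) :
    ENNReal.ofReal (smcQ γ q 1 K x a) = ∏ k, ENNReal.ofReal (q 1 (traj x a 1 k)) := by
  simp only [smcQ, Nat.sub_self, Finset.range_zero, Finset.prod_empty, mul_one]
  exact ENNReal.ofReal_prod_of_nonneg fun k _ => (hq 1 le_rfl hT _).le

theorem ofReal_smcQ_succ (hγ : PosUpTo T γ) (hq : PosUpTo T q) (hK : K ≠ 0) {n : ℕ}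
    (hn : n + 2 ≤ T) (x : ℕ → Fin K → X) (a : ℕ → Fin K → Fin K) :
    ENNReal.ofReal (smcQ γ q (n + 2) K x a)
      = ENNReal.ofReal (smcQ γ q (n + 1) K x a) *
          ∏ k, resampleMove γ q (traj x a (n + 1)) (a n k) (x (n + 1) k) := by
  have hS := sum_incW_pos hγ hq hK (by omega) (by omega) (traj x a (n + 1))
  have hsplit : smcQ γ q (n + 2) K x a = smcQ γ q (n + 1) K x a *
      ∏ k, q (n + 2) (traj x a (n + 2) k) *
        (incW γ q (n + 1) (traj x a (n + 1) (a n k)) /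
          ∑ l, incW γ q (n + 1) (traj x a (n + 1) l)) := by
    rw [smcQ, smcQ, show n + 2 - 1 = n + 1 from rfl, Finset.prod_range_succ, mul_assoc]
    rfl
  rw [hsplit, ENNReal.ofReal_mul (smcQ_nonneg hγ hq (by omega) x a),
    ENNReal.ofReal_prod_of_nonneg fun k _ => mul_nonneg (hq _ (by omega) hn _).le
      (div_nonneg (incW_pos hγ hq _ (by omega) (by omega) _).le hS.le)]
  refine congrArg _ (Finset.prod_congr rfl fun k _ => ?_)
  rw [ENNReal.ofReal_mul (hq _ (by omega) hn _).le, ENNReal.ofReal_div_of_pos hS,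
    ENNReal.ofReal_sum_of_nonneg fun l _ => (incW_pos hγ hq _ (by omega) (by omega) _).le]
  rfl

theorem ofReal_smcZhat_succ (hγ : PosUpTo T γ) (hq : PosUpTo T q) (hK : K ≠ 0) {m : ℕ}
    (hm : m + 1 ≤ T) (x : ℕ → Fin K → X) (a : ℕ → Fin K → Fin K) :
    ENNReal.ofReal (smcZhat γ q (m + 1) K x a)
      = ENNReal.ofReal (smcZhat γ q m K x a) *
          ((K : ℝ≥0∞)⁻¹ * ∑ k, weight γ q (m + 1) (traj x a (m + 1) k)) := by
  have hw : ∀ t, 1 ≤ t → t ≤ T → ∀ l, 0 ≤ incW γ q t (traj x a t l) :=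
    fun t h1 h2 l => (incW_pos hγ hq t h1 h2 _).le
  rw [smcZhat, Finset.prod_range_succ, ENNReal.ofReal_mul, ENNReal.ofReal_mul (by positivity),
    ENNReal.ofReal_inv_of_pos, ENNReal.ofReal_natCast,
    ENNReal.ofReal_sum_of_nonneg fun l _ => hw _ (by omega) hm l]
  · rfl
  · exact_mod_cast Nat.pos_of_ne_zero hK
  · exact Finset.prod_nonneg fun t ht => mul_nonneg (by positivity)
      (Finset.sum_nonneg fun l _ => hw _ (by omega) (by have := Finset.mem_range.1 ht; omega) l)

theorem ofReal_q_mul_weight_one (hq : PosUpTo T q) (hT : 1 ≤ T) (v : Fin 1 → X) :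
    ENNReal.ofReal (q 1 v) * weight γ q 1 v = ENNReal.ofReal (γ 1 v) := by
  rw [weight, ← ENNReal.ofReal_mul (hq 1 le_rfl hT v).le, incW,
    mul_div_cancel₀ _ (hq 1 le_rfl hT v).ne']

theorem ofReal_q_mul_weight_succ (hγ : PosUpTo T γ) (hq : PosUpTo T q) {n : ℕ}
    (hn : n + 2 ≤ T) (v : Fin (n + 2) → X) :
    ENNReal.ofReal (q (n + 2) v) * weight γ q (n + 2) v
      = ENNReal.ofReal (γ (n + 2) v / γ (n + 1) (Fin.init v)) := by
  have hq' := (hq _ (by omega) hn v).ne'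
  have hγ' := (hγ _ (by omega) (by omega) (Fin.init v)).ne'
  rw [weight, ← ENNReal.ofReal_mul (hq _ (by omega) hn v).le, incW]
  field_simp

theorem traj_congr {x x' : ℕ → Fin K → X} {a a' : ℕ → Fin K → Fin K} :
    ∀ {t : ℕ}, (∀ s < t, x s = x' s) → (∀ s, s + 1 < t → a s = a' s) →
      traj x a t = traj x' a' t
  | 0, _, _ => rfl
  | 1, hx, _ => by funext k; simp only [traj, hx 0 one_pos]
  | t + 2, hx, ha => by
    funext k
    simp only [traj]
    rw [ha t (by omega), hx (t + 1) (by omega),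
      traj_congr (fun s hs => hx s (by omega)) (fun s hs => ha s (by omega))]

theorem smcQ_congr {x x' : ℕ → Fin K → X} {a a' : ℕ → Fin K → Fin K} {n : ℕ}
    (hx : ∀ s < n + 1, x s = x' s) (ha : ∀ s < n, a s = a' s) :
    smcQ γ q (n + 1) K x a = smcQ γ q (n + 1) K x' a' := by
  have htraj : ∀ t ≤ n + 1, traj x a t = traj x' a' t := fun t ht =>
    traj_congr (fun s hs => hx s (by omega)) (fun s hs => ha s (by omega))
  rw [smcQ, smcQ, Nat.add_sub_cancel, htraj 1 (by omega)]
  refine congrArg _ (Finset.prod_congr rfl fun t ht => ?_)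
  have ht := Finset.mem_range.1 ht
  rw [htraj (t + 2) (by omega), htraj (t + 1) (by omega), ha t ht]

theorem smcZhat_congr {x x' : ℕ → Fin K → X} {a a' : ℕ → Fin K → Fin K} {m : ℕ}
    (hx : ∀ s < m, x s = x' s) (ha : ∀ s, s + 1 < m → a s = a' s) :
    smcZhat γ q m K x a = smcZhat γ q m K x' a' := by
  refine Finset.prod_congr rfl fun t ht => ?_
  have ht : t < m := Finset.mem_range.1 ht
  rw [traj_congr (t := t + 1) (fun s hs => hx s (by omega)) (fun s hs => ha s (by omega))]

section Arrays

variable {n : ℕ}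

theorem extX_snoc_of_lt (xf : Fin (n + 1) → Fin K → X) (y : Fin K → X) {s : ℕ}
    (hs : s < n + 1) :
    extX (n + 1).succ_pos (Fin.snoc xf y) s = extX n.succ_pos xf s := by
  funext k
  rw [extX, extX, dif_pos (by omega), dif_pos hs]
  exact congrFun (Fin.snoc_castSucc (α := fun _ => Fin K → X) y xf ⟨s, hs⟩) k

theorem extX_snoc_last (xf : Fin (n + 1) → Fin K → X) (y : Fin K → X) :
    extX (n + 1).succ_pos (Fin.snoc xf y) (n + 1) = y := by
  funext k
  rw [extX, dif_pos (by omega)]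
  exact congrFun (Fin.snoc_last (α := fun _ => Fin K → X) y xf) k

theorem extA_snoc_of_lt (af : Fin n → Fin K → Fin K) (b : Fin K → Fin K) {s : ℕ}
    (hs : s < n) :
    extA (T := n + 2) (Fin.snoc af b) s = extA (T := n + 1) af s := by
  funext k
  rw [extA, extA, dif_pos (by omega), dif_pos (by omega)]
  exact congrFun (Fin.snoc_castSucc (α := fun _ => Fin K → Fin K) b af ⟨s, hs⟩) k

theorem extA_snoc_last (af : Fin n → Fin K → Fin K) (b : Fin K → Fin K) :
    extA (T := n + 2) (Fin.snoc af b) n = b := by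
  funext k
  rw [extA, dif_pos (by omega)]
  exact congrFun (Fin.snoc_last (α := fun _ => Fin K → Fin K) b af) k

/-! The particle system of the first `n + 1` time steps as a function of the finite particle
array `xf` and ancestor array `af`, with densities read in `ℝ≥0∞` for `lintegral`. -/

def trajFin (xf : Fin (n + 1) → Fin K → X) (af : Fin n → Fin K → Fin K) :
    (t : ℕ) → Fin K → Fin t → X :=
  traj (extX n.succ_pos xf) (extA (T := n + 1) af)

variable (γ q) in
noncomputable def smcQFin (xf : Fin (n + 1) → Fin K → X) (af : Fin n → Fin K → Fin K) :
    ℝ≥0∞ :=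
  ENNReal.ofReal (smcQ γ q (n + 1) K (extX n.succ_pos xf) (extA (T := n + 1) af))

variable (γ q) in
noncomputable def smcZhatFin (m : ℕ) (xf : Fin (n + 1) → Fin K → X)
    (af : Fin n → Fin K → Fin K) : ℝ≥0∞ :=
  ENNReal.ofReal (smcZhat γ q m K (extX n.succ_pos xf) (extA (T := n + 1) af))

variable {xf : Fin (n + 1) → Fin K → X} {af : Fin n → Fin K → Fin K}

theorem trajFin_one (k : Fin K) : trajFin xf af 1 k = fun _ => xf 0 k := by
  funext i
  show extX n.succ_pos xf 0 k = xf 0 k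
  rw [extX, dif_pos n.succ_pos]
  rfl

theorem trajFin_snoc_of_le (y : Fin K → X) (b : Fin K → Fin K) {t : ℕ} (ht : t ≤ n + 1) :
    trajFin (Fin.snoc xf y) (Fin.snoc af b) t = trajFin xf af t :=
  traj_congr (fun s hs => extX_snoc_of_lt xf y (by omega))
    (fun s hs => extA_snoc_of_lt af b (by omega))

theorem trajFin_snoc (y : Fin K → X) (b : Fin K → Fin K) (k : Fin K) :
    trajFin (Fin.snoc xf y) (Fin.snoc af b) (n + 2) k
      = Fin.snoc (trajFin xf af (n + 1) (b k)) (y k) := by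
  rw [trajFin, traj, extA_snoc_last, extX_snoc_last, ← trajFin,
    trajFin_snoc_of_le y b le_rfl]

theorem smcQFin_fin_one (hq : PosUpTo T q) (hT : 1 ≤ T) (xf : Fin 1 → Fin K → X)
    (af : Fin 0 → Fin K → Fin K) :
    smcQFin γ q xf af = ∏ k, ENNReal.ofReal (q 1 (fun _ => xf 0 k)) := by
  rw [smcQFin, ofReal_smcQ_one hq hT]
  exact Finset.prod_congr rfl fun k _ => by rw [← trajFin_one (af := af) k]; rfl

theorem smcQFin_snoc (hγ : PosUpTo T γ) (hq : PosUpTo T q) (hK : K ≠ 0) (hn : n + 2 ≤ T)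
    (y : Fin K → X) (b : Fin K → Fin K) :
    smcQFin γ q (Fin.snoc xf y) (Fin.snoc af b)
      = smcQFin γ q xf af * ∏ k, resampleMove γ q (trajFin xf af (n + 1)) (b k) (y k) := by
  rw [smcQFin, ofReal_smcQ_succ hγ hq hK hn, extA_snoc_last, extX_snoc_last, smcQFin,
    smcQ_congr (fun s hs => extX_snoc_of_lt xf y hs) (fun s hs => extA_snoc_of_lt af b hs)]
  rw [← trajFin_snoc_of_le y b le_rfl]
  rfl

theorem smcZhatFin_snoc (y : Fin K → X) (b : Fin K → Fin K) {m : ℕ} (hm : m ≤ n + 1) :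
    smcZhatFin γ q m (Fin.snoc xf y) (Fin.snoc af b) = smcZhatFin γ q m xf af := by
  rw [smcZhatFin, smcZhatFin, smcZhat_congr (fun s hs => extX_snoc_of_lt xf y (by omega))
    (fun s hs => extA_snoc_of_lt af b (by omega))]

theorem smcZhatFin_zero : smcZhatFin γ q 0 xf af = 1 := by
  simp [smcZhatFin, smcZhat]

theorem smcZhatFin_succ (hγ : PosUpTo T γ) (hq : PosUpTo T q) (hK : K ≠ 0) {m : ℕ}
    (hm : m + 1 ≤ T) :
    smcZhatFin γ q (m + 1) xf af
      = smcZhatFin γ q m xf af *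
          ((K : ℝ≥0∞)⁻¹ * ∑ k, weight γ q (m + 1) (trajFin xf af (m + 1) k)) :=
  ofReal_smcZhat_succ hγ hq hK hm _ _

end Arrays

section Measurability

variable [MeasurableSpace X]

theorem measurable_traj (a : ℕ → Fin K → Fin K) :
    ∀ (t : ℕ) (k : Fin K), Measurable fun x : ℕ → Fin K → X => traj x a t k
  | 0, _ => measurable_const
  | 1, k => measurable_pi_lambda _ fun _ => (measurable_pi_apply k).comp (measurable_pi_apply 0)
  | t + 2, k => measurable_fin_snoc.comp ((measurable_traj a (t + 1) (a t k)).prodMk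
      ((measurable_pi_apply k).comp (measurable_pi_apply (t + 1))))

theorem measurable_extX {m : ℕ} (h : 0 < m) :
    Measurable (extX h : (Fin m → Fin K → X) → ℕ → Fin K → X) := by
  refine measurable_pi_lambda _ fun s => measurable_pi_lambda _ fun k => ?_
  unfold extX
  split_ifs <;> exact (measurable_pi_apply k).comp (measurable_pi_apply _)

theorem measurable_incW (hγ : MeasurableUpTo T γ) (hq : MeasurableUpTo T q) {t : ℕ}
    (h1 : 1 ≤ t) (hT : t ≤ T) : Measurable (incW γ q t) := by
  match t, h1 with
  | 1, _ => exact (hγ 1 le_rfl hT).div (hq 1 le_rfl hT)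
  | t + 2, _ =>
    have hinit : Measurable (Fin.init : (Fin (t + 2) → X) → Fin (t + 1) → X) :=
      measurable_pi_lambda _ fun i => measurable_pi_apply i.castSucc
    exact (hγ _ (by omega) hT).div
      (((hγ _ (by omega) (by omega)).comp hinit).mul (hq _ (by omega) hT))

theorem measurable_smcQ (hγ : MeasurableUpTo T γ) (hq : MeasurableUpTo T q) {n : ℕ}
    (hn : n + 1 ≤ T) (a : ℕ → Fin K → Fin K) :
    Measurable fun x : ℕ → Fin K → X => smcQ γ q (n + 1) K x a := by
  have hw : ∀ t, 1 ≤ t → t ≤ T → ∀ k,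
      Measurable fun x : ℕ → Fin K → X => incW γ q t (traj x a t k) :=
    fun t h1 h2 k => (measurable_incW hγ hq h1 h2).comp (measurable_traj a t k)
  refine (Finset.measurable_prod _ fun k _ => (hq 1 le_rfl (by omega)).comp
    (measurable_traj a 1 k)).mul
    (Finset.measurable_prod _ fun t ht => Finset.measurable_prod _ fun k _ => ?_)
  have ht : t + 2 ≤ T := by have := Finset.mem_range.1 ht; omega
  exact ((hq _ (by omega) ht).comp (measurable_traj a _ k)).mul
    ((hw _ (by omega) (by omega) _).div
      (Finset.measurable_sum _ fun l _ => hw _ (by omega) (by omega) l))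

theorem measurable_smcZhat (hγ : MeasurableUpTo T γ) (hq : MeasurableUpTo T q) {m : ℕ}
    (hm : m ≤ T) (a : ℕ → Fin K → Fin K) :
    Measurable fun x : ℕ → Fin K → X => smcZhat γ q m K x a :=
  Finset.measurable_prod _ fun t ht => (Finset.measurable_sum _ fun l _ =>
    (measurable_incW hγ hq (by omega) (by have := Finset.mem_range.1 ht; omega)).comp
      (measurable_traj a _ l)).const_mul _

variable {n : ℕ}

theorem measurable_trajFin (af : Fin n → Fin K → Fin K) (t : ℕ) (k : Fin K) :
    Measurable fun xf : Fin (n + 1) → Fin K → X => trajFin xf af t k :=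
  (measurable_traj _ t k).comp (measurable_extX _)

theorem measurable_smcQFin (hγ : MeasurableUpTo T γ) (hq : MeasurableUpTo T q) (hn : n + 1 ≤ T)
    (af : Fin n → Fin K → Fin K) :
    Measurable fun xf : Fin (n + 1) → Fin K → X => smcQFin γ q xf af :=
  ENNReal.measurable_ofReal.comp ((measurable_smcQ hγ hq hn _).comp (measurable_extX _))

theorem measurable_smcZhatFin (hγ : MeasurableUpTo T γ) (hq : MeasurableUpTo T q) {m : ℕ}
    (hm : m ≤ T) (af : Fin n → Fin K → Fin K) :
    Measurable fun xf : Fin (n + 1) → Fin K → X => smcZhatFin γ q m xf af :=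
  ENNReal.measurable_ofReal.comp ((measurable_smcZhat hγ hq hm _).comp (measurable_extX _))

theorem measurable_weight (hγ : MeasurableUpTo T γ) (hq : MeasurableUpTo T q) {t : ℕ}
    (h1 : 1 ≤ t) (hT : t ≤ T) : Measurable (weight γ q t) :=
  ENNReal.measurable_ofReal.comp (measurable_incW hγ hq h1 hT)

theorem measurable_resampleMove (hq : MeasurableUpTo T q) (hn : n + 2 ≤ T)
    (τ : Fin K → Fin (n + 1) → X) (a : Fin K) : Measurable (resampleMove γ q τ a) :=
  (ENNReal.measurable_ofReal.comp ((hq _ (by omega) hn).comp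
    (measurable_fin_snoc_right (τ a)))).mul_const _

theorem measurable_smcZhatFin_mul_mean (hγ : MeasurableUpTo T γ) (hq : MeasurableUpTo T q)
    {m t : ℕ} (hm : m ≤ T) (h1 : 1 ≤ t) (ht : t ≤ T) {f : (Fin t → X) → ℝ≥0∞}
    (hf : Measurable f) (af : Fin n → Fin K → Fin K) :
    Measurable fun xf : Fin (n + 1) → Fin K → X => smcZhatFin γ q m xf af *
      ((K : ℝ≥0∞)⁻¹ * ∑ k, weight γ q t (trajFin xf af t k) * f (trajFin xf af t k)) :=
  (measurable_smcZhatFin hγ hq hm af).mul (Measurable.const_mul (Finset.measurable_sum _ fun k _ =>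
    ((measurable_weight hγ hq h1 ht).comp (measurable_trajFin af t k)).mul
      (hf.comp (measurable_trajFin af t k))) _)

end Measurability

variable [MeasurableSpace X] {μ : Measure X} {n : ℕ}

variable (μ) in
def IsNormalizedUpTo (T : ℕ) (q : (t : ℕ) → (Fin t → X) → ℝ) : Prop :=
  ∀ t < T, ∀ v : Fin t → X, ∫ z, q (t + 1) (Fin.snoc v z) ∂μ = 1

theorem lintegral_ofReal_snoc_eq_one (hq : PosUpTo T q) (hq1 : IsNormalizedUpTo μ T q)
    {t : ℕ} (ht : t < T) (v : Fin t → X) :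
    ∫⁻ z, ENNReal.ofReal (q (t + 1) (Fin.snoc v z)) ∂μ = 1 := by
  have hint : Integrable (fun z => q (t + 1) (Fin.snoc v z)) μ := by
    by_contra h
    simpa [integral_undef h] using hq1 t ht v
  rw [← ofReal_integral_eq_lintegral_ofReal hint
    (ae_of_all _ fun z => (hq (t + 1) (by omega) (by omega) _).le), hq1 t ht v, ENNReal.ofReal_one]

theorem lintegral_resampleMove (hq : PosUpTo T q) (hqm : MeasurableUpTo T q)
    (hq1 : IsNormalizedUpTo μ T q) (hn : n + 2 ≤ T) (τ : Fin K → Fin (n + 1) → X)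
    (a : Fin K) :
    ∫⁻ z, resampleMove γ q τ a z ∂μ
      = weight γ q (n + 1) (τ a) / ∑ l, weight γ q (n + 1) (τ l) := by
  simp only [resampleMove]
  rw [lintegral_mul_const (f := fun z => ENNReal.ofReal (q (n + 2) (Fin.snoc (τ a) z))) _
      (ENNReal.measurable_ofReal.comp ((hqm _ (by omega) hn).comp
        (measurable_fin_snoc_right (τ a)))),
    lintegral_ofReal_snoc_eq_one hq hq1 (by omega : n + 1 < T), one_mul]

theorem sum_lintegral_resampleMove (hγ : PosUpTo T γ) (hq : PosUpTo T q)
    (hqm : MeasurableUpTo T q) (hq1 : IsNormalizedUpTo μ T q) (hK : K ≠ 0) (hn : n + 2 ≤ T)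
    (τ : Fin K → Fin (n + 1) → X) :
    ∑ a, ∫⁻ z, resampleMove γ q τ a z ∂μ = 1 := by
  simp_rw [lintegral_resampleMove hq hqm hq1 hn, ENNReal.div_eq_inv_mul, ← Finset.mul_sum]
  exact ENNReal.inv_mul_cancel (sum_weight_ne_zero hγ hq hK (by omega) (by omega) τ)
    (sum_weight_ne_top τ)

variable (γ μ) in
/-- `γ_{n+2}(u, z) / γ_{n+1}(u)` is the unnormalized conditional target density of the
coordinate added at time `n + 2`. -/
noncomputable def lintegralCondTarget (n : ℕ) (f : (Fin (n + 2) → X) → ℝ≥0∞)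
    (u : Fin (n + 1) → X) : ℝ≥0∞ :=
  ∫⁻ z, ENNReal.ofReal (γ (n + 2) (Fin.snoc u z) / γ (n + 1) u) * f (Fin.snoc u z) ∂μ

theorem measurable_lintegralCondTarget [SFinite μ] (hγ : MeasurableUpTo T γ) (hn : n + 2 ≤ T)
    {f : (Fin (n + 2) → X) → ℝ≥0∞} (hf : Measurable f) :
    Measurable (lintegralCondTarget γ μ n f) :=
  Measurable.lintegral_prod_right' (f := fun p : (Fin (n + 1) → X) × X =>
    ENNReal.ofReal (γ (n + 2) (Fin.snoc p.1 p.2) / γ (n + 1) p.1) * f (Fin.snoc p.1 p.2))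
    ((ENNReal.measurable_ofReal.comp (((hγ _ (by omega) hn).comp measurable_fin_snoc).div
      ((hγ _ (by omega) (by omega)).comp measurable_fst))).mul (hf.comp measurable_fin_snoc))

theorem lintegral_ofReal_mul_lintegralCondTarget [SigmaFinite μ] (hγ : PosUpTo T γ)
    (hγm : MeasurableUpTo T γ) (hn : n + 2 ≤ T) {f : (Fin (n + 2) → X) → ℝ≥0∞}
    (hf : Measurable f) :
    ∫⁻ u, ENNReal.ofReal (γ (n + 1) u) * lintegralCondTarget γ μ n f u
        ∂Measure.pi (fun _ => μ)
      = ∫⁻ v, ENNReal.ofReal (γ (n + 2) v) * f v ∂Measure.pi (fun _ => μ) := by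
  rw [lintegral_pi_fin_snoc μ (F := fun v => ENNReal.ofReal (γ (n + 2) v) * f v)
    ((ENNReal.measurable_ofReal.comp (hγm _ (by omega) hn)).mul hf)]
  refine lintegral_congr fun u => ?_
  have hu := hγ (n + 1) (by omega) (by omega) u
  rw [lintegralCondTarget, ← lintegral_const_mul' _ _ ENNReal.ofReal_ne_top]
  refine lintegral_congr fun z => ?_
  rw [← mul_assoc, ← ENNReal.ofReal_mul hu.le, mul_div_cancel₀ _ hu.ne']

theorem lintegral_resampleMove_mul_weight (hγ : PosUpTo T γ) (hq : PosUpTo T q) (hK : K ≠ 0)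
    (hn : n + 2 ≤ T) (τ : Fin K → Fin (n + 1) → X) (a : Fin K)
    (f : (Fin (n + 2) → X) → ℝ≥0∞) :
    ∫⁻ z, resampleMove γ q τ a z *
        (weight γ q (n + 2) (Fin.snoc (τ a) z) * f (Fin.snoc (τ a) z)) ∂μ
      = weight γ q (n + 1) (τ a) / (∑ l, weight γ q (n + 1) (τ l)) *
          lintegralCondTarget γ μ n f (τ a) := by
  rw [lintegralCondTarget, ← lintegral_const_mul'
    (weight γ q (n + 1) (τ a) / ∑ l, weight γ q (n + 1) (τ l)) _
    (ENNReal.div_ne_top ENNReal.ofReal_ne_top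
      (sum_weight_ne_zero hγ hq hK (by omega) (by omega) τ))]
  refine lintegral_congr fun z => ?_
  have hqw := ofReal_q_mul_weight_succ hγ hq hn (Fin.snoc (τ a) z)
  rw [Fin.init_snoc] at hqw
  rw [resampleMove, ← hqw]
  ring

section Layers

variable [SigmaFinite μ] (hγ : PosUpTo T γ) (hq : PosUpTo T q) (hγm : MeasurableUpTo T γ)
  (hqm : MeasurableUpTo T q) (hq1 : IsNormalizedUpTo μ T q) (hK : K ≠ 0)
include hγ hq hγm hqm hK

theorem sum_lintegral_smcQFin_succ_mul (hn : n + 2 ≤ T)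
    {F : (Fin (n + 2) → Fin K → X) → (Fin (n + 1) → Fin K → Fin K) → ℝ≥0∞}
    (hF : ∀ af, Measurable fun xf => F xf af) :
    ∑ af, ∫⁻ xf, smcQFin γ q xf af * F xf af ∂Measure.pi (fun _ => Measure.pi fun _ => μ)
      = ∑ af, ∫⁻ xf, smcQFin γ q xf af *
          ∑ b, ∫⁻ y, (∏ k, resampleMove γ q (trajFin xf af (n + 1)) (b k) (y k)) *
            F (Fin.snoc xf y) (Fin.snoc af b) ∂Measure.pi (fun _ => μ)
          ∂Measure.pi (fun _ => Measure.pi fun _ => μ) := by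
  rw [Fintype.sum_pi_fin_snoc]
  refine Finset.sum_congr rfl fun af _ => ?_
  have hG : ∀ b, Measurable fun xf => smcQFin γ q xf (Fin.snoc af b) * F xf (Fin.snoc af b) :=
    fun b => (measurable_smcQFin hγm hqm hn _).mul (hF _)
  simp_rw [lintegral_pi_fin_snoc _ (hG _)]
  rw [← lintegral_finsetSum _ fun b _ => ?_]
  swap
  · exact ((hG b).comp measurable_fin_snoc).lintegral_prod_right'
  refine lintegral_congr fun xf => ?_
  simp_rw [smcQFin_snoc hγ hq hK hn, mul_assoc]
  rw [Finset.mul_sum]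
  exact Finset.sum_congr rfl fun b _ => lintegral_const_mul' _ _ ENNReal.ofReal_ne_top

include hq1

theorem sum_lintegral_smcQFin :
    ∀ n, n + 1 ≤ T → ∑ af : Fin n → Fin K → Fin K,
      ∫⁻ xf, smcQFin γ q xf af ∂Measure.pi (fun _ => Measure.pi fun _ => μ) = 1
  | 0, hT => by
    rw [Fintype.sum_unique,
      lintegral_pi_fin_one (Measure.pi fun _ => μ) (measurable_smcQFin hγm hqm hT _)]
    simp_rw [smcQFin_fin_one hq hT]
    rw [lintegral_pi_fin_prod μ (g := fun _ z => ENNReal.ofReal (q 1 fun _ => z))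
      fun _ => ENNReal.measurable_ofReal.comp
        ((hqm 1 le_rfl hT).comp (measurable_fin_snoc_right Fin.elim0))]
    exact Finset.prod_eq_one fun _ _ => lintegral_ofReal_snoc_eq_one hq hq1 hT Fin.elim0
  | n + 1, hn => by
    have hstep := sum_lintegral_smcQFin_succ_mul hγ hq hγm hqm hK hn (μ := μ)
      (F := fun _ _ => 1) fun _ => measurable_const
    simp only [mul_one] at hstep
    rw [hstep, ← sum_lintegral_smcQFin n (by omega)]
    refine Finset.sum_congr rfl fun af _ => lintegral_congr fun xf => ?_
    rw [sum_lintegral_pi_prod μ fun _ => measurable_resampleMove hqm hn _,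
      Finset.prod_eq_one fun _ _ => sum_lintegral_resampleMove hγ hq hqm hq1 hK hn _, mul_one]

theorem sum_lintegral_resampleMove_mul_smcZhatFin (hn : n + 2 ≤ T)
    (xf : Fin (n + 1) → Fin K → X) (af : Fin n → Fin K → Fin K)
    {f : (Fin (n + 2) → X) → ℝ≥0∞} (hf : Measurable f) :
    ∑ b, ∫⁻ y, (∏ k, resampleMove γ q (trajFin xf af (n + 1)) (b k) (y k)) *
        (smcZhatFin γ q (n + 1) (Fin.snoc xf y) (Fin.snoc af b) * ((K : ℝ≥0∞)⁻¹ *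
          ∑ k, weight γ q (n + 2) (trajFin (Fin.snoc xf y) (Fin.snoc af b) (n + 2) k) *
            f (trajFin (Fin.snoc xf y) (Fin.snoc af b) (n + 2) k))) ∂Measure.pi (fun _ => μ)
      = smcZhatFin γ q n xf af * ((K : ℝ≥0∞)⁻¹ *
          ∑ k, weight γ q (n + 1) (trajFin xf af (n + 1) k) *
            lintegralCondTarget γ μ n f (trajFin xf af (n + 1) k)) := by
  set τ := trajFin xf af (n + 1)
  set S := ∑ l, weight γ q (n + 1) (τ l)
  set C := smcZhatFin γ q n xf af * ((K : ℝ≥0∞)⁻¹ * S)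
  have hS0 : S ≠ 0 := sum_weight_ne_zero hγ hq hK (by omega) (by omega) τ
  have hSt : S ≠ ⊤ := sum_weight_ne_top τ
  have hC : C ≠ ⊤ := ENNReal.mul_ne_top ENNReal.ofReal_ne_top
    (ENNReal.mul_ne_top (ENNReal.inv_ne_top.2 (by exact_mod_cast hK)) hSt)
  have hpt : ∀ (b : Fin K → Fin K) (y : Fin K → X),
      smcZhatFin γ q (n + 1) (Fin.snoc xf y) (Fin.snoc af b) * ((K : ℝ≥0∞)⁻¹ *
        ∑ k, weight γ q (n + 2) (trajFin (Fin.snoc xf y) (Fin.snoc af b) (n + 2) k) *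
          f (trajFin (Fin.snoc xf y) (Fin.snoc af b) (n + 2) k))
      = C * ((K : ℝ≥0∞)⁻¹ * ∑ k, weight γ q (n + 2) (Fin.snoc (τ (b k)) (y k)) *
          f (Fin.snoc (τ (b k)) (y k))) := fun b y => by
    simp only [smcZhatFin_snoc y b le_rfl, smcZhatFin_succ hγ hq hK (by omega : n + 1 ≤ T),
      trajFin_snoc, C, S, τ, mul_assoc]
  simp_rw [hpt, mul_left_comm _ C, lintegral_const_mul' _ _ hC, ← Finset.mul_sum]
  rw [sum_lintegral_pi_prod_mul_mean μ
    (φ := fun a z => weight γ q (n + 2) (Fin.snoc (τ a) z) * f (Fin.snoc (τ a) z))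
    (measurable_resampleMove hqm hn τ)
    (fun a => (measurable_weight hγm hqm (by omega) hn).comp (measurable_fin_snoc_right (τ a))
      |>.mul (hf.comp (measurable_fin_snoc_right (τ a))))
    (sum_lintegral_resampleMove hγ hq hqm hq1 hK hn τ) hK]
  simp_rw [lintegral_resampleMove_mul_weight hγ hq hK hn, ENNReal.div_eq_inv_mul, mul_assoc,
    ← Finset.mul_sum]
  -- the factor `K⁻¹ S` of `Ẑ_{n+1}` cancels the normalization of the resampling weights
  rw [mul_assoc]
  congr 1
  rw [mul_assoc, ← mul_assoc S, ENNReal.mul_inv_cancel hS0 hSt, one_mul]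

theorem sum_lintegral_smcQFin_mul_smcZhatFin_mean :
    ∀ n, n + 1 ≤ T → ∀ {f : (Fin (n + 1) → X) → ℝ≥0∞}, Measurable f →
      ∑ af : Fin n → Fin K → Fin K, ∫⁻ xf, smcQFin γ q xf af * (smcZhatFin γ q n xf af *
          ((K : ℝ≥0∞)⁻¹ * ∑ k, weight γ q (n + 1) (trajFin xf af (n + 1) k) *
            f (trajFin xf af (n + 1) k))) ∂Measure.pi (fun _ => Measure.pi fun _ => μ)
        = ∫⁻ v, ENNReal.ofReal (γ (n + 1) v) * f v ∂Measure.pi (fun _ => μ)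
  | 0, hT, f, hf => by
    rw [Fintype.sum_unique, lintegral_pi_fin_one (Measure.pi fun _ => μ)
        ((measurable_smcQFin hγm hqm hT _).fun_mul
          (measurable_smcZhatFin_mul_mean hγm hqm (Nat.zero_le _) le_rfl hT hf _)),
      lintegral_pi_fin_one μ (F := fun v => ENNReal.ofReal (γ (0 + 1) v) * f v)
        ((ENNReal.measurable_ofReal.comp (hγm 1 le_rfl hT)).mul hf)]
    simp_rw [smcQFin_fin_one hq hT, smcZhatFin_zero, one_mul, trajFin_one]
    rw [lintegral_pi_prod_mul_mean μ (g := fun z => ENNReal.ofReal (q 1 fun _ => z))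
      (φ := fun z => weight γ q 1 (fun _ => z) * f (fun _ => z))
      (ENNReal.measurable_ofReal.comp
        ((hqm 1 le_rfl hT).comp (measurable_fin_snoc_right Fin.elim0)))
      ((measurable_weight hγm hqm le_rfl hT).mul hf |>.comp (measurable_fin_snoc_right Fin.elim0))
      (lintegral_ofReal_snoc_eq_one hq hq1 hT Fin.elim0) hK]
    simp_rw [← mul_assoc, ofReal_q_mul_weight_one hq hT]
  | n + 1, hn, f, hf => by
    rw [sum_lintegral_smcQFin_succ_mul hγ hq hγm hqm hK hn
        (measurable_smcZhatFin_mul_mean hγm hqm (by omega) (by omega) hn hf),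
      ← lintegral_ofReal_mul_lintegralCondTarget hγ hγm hn hf,
      ← sum_lintegral_smcQFin_mul_smcZhatFin_mean n (by omega)
        (measurable_lintegralCondTarget hγm hn hf)]
    simp_rw [sum_lintegral_resampleMove_mul_smcZhatFin hγ hq hγm hqm hq1 hK hn _ _ hf]

theorem sum_lintegral_smcQFin_mul_smcZhatFin (hn : n + 1 ≤ T)
    (hγi : Integrable (γ (n + 1)) (Measure.pi fun _ => μ)) :
    ∑ af : Fin n → Fin K → Fin K,
      ∫⁻ xf, smcQFin γ q xf af * smcZhatFin γ q (n + 1) xf af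
        ∂Measure.pi (fun _ => Measure.pi fun _ => μ)
      = ENNReal.ofReal (∫ v, γ (n + 1) v ∂Measure.pi fun _ => μ) := by
  have h := sum_lintegral_smcQFin_mul_smcZhatFin_mean hγ hq hγm hqm hq1 hK n hn
    (f := fun _ => 1) measurable_const
  simp only [mul_one] at h
  simp_rw [smcZhatFin_succ hγ hq hK hn, h]
  exact (ofReal_integral_eq_lintegral_ofReal hγi
    (ae_of_all _ fun v => (hγ _ (by omega) hn v).le)).symm

theorem integrable_smcQ_and_sum_integral_smcQ (hn : n + 1 ≤ T) :
    (∀ af : Fin n → Fin K → Fin K, Integrable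
      (fun xf => smcQ γ q (n + 1) K (extX n.succ_pos xf) (extA (T := n + 1) af))
      (Measure.pi fun _ => Measure.pi fun _ => μ)) ∧
    ∑ af : Fin n → Fin K → Fin K,
      ∫ xf, smcQ γ q (n + 1) K (extX n.succ_pos xf) (extA (T := n + 1) af)
        ∂Measure.pi (fun _ => Measure.pi fun _ => μ) = 1 :=
  integrable_and_sum_integral_eq_of_sum_lintegral_ofReal (fun _ _ => smcQ_nonneg hγ hq hn _ _)
    (fun _ => ((measurable_smcQ hγm hqm hn _).comp (measurable_extX _)).aestronglyMeasurable)
    zero_le_one (ENNReal.ofReal_one ▸ sum_lintegral_smcQFin hγ hq hγm hqm hq1 hK n hn)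

theorem sum_integral_smcQ_mul_smcZhat (hn : n + 1 ≤ T)
    (hγi : Integrable (γ (n + 1)) (Measure.pi fun _ => μ)) :
    ∑ af : Fin n → Fin K → Fin K,
      ∫ xf, smcQ γ q (n + 1) K (extX n.succ_pos xf) (extA (T := n + 1) af) *
          smcZhat γ q (n + 1) K (extX n.succ_pos xf) (extA (T := n + 1) af)
        ∂Measure.pi (fun _ => Measure.pi fun _ => μ)
      = ∫ v, γ (n + 1) v ∂Measure.pi fun _ => μ := by
  refine (integrable_and_sum_integral_eq_of_sum_lintegral_ofReal
    (f := fun (af : Fin n → Fin K → Fin K) xf =>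
      smcQ γ q (n + 1) K (extX n.succ_pos xf) (extA (T := n + 1) af) *
        smcZhat γ q (n + 1) K (extX n.succ_pos xf) (extA (T := n + 1) af))
    (fun _ _ => mul_nonneg (smcQ_nonneg hγ hq hn _ _) (smcZhat_pos hγ hq hK hn _ _).le)
    (fun _ => (((measurable_smcQ hγm hqm hn _).mul (measurable_smcZhat hγm hqm hn _)).comp
      (measurable_extX _)).aestronglyMeasurable)
    (integral_nonneg fun v => (hγ _ (by omega) hn v).le) ?_).2
  simp_rw [ENNReal.ofReal_mul (smcQ_nonneg hγ hq hn _ _)]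
  exact sum_lintegral_smcQFin_mul_smcZhatFin hγ hq hγm hqm hq1 hK hn hγi

end Layers

end SMC

/-- **KL decomposition of the SMC evidence lower bound.**
Fix `T ≥ 1`, `K ≥ 1`, strictly positive unnormalized targets `γ_1, …, γ_T` with
normalizing constants `Z_1, …, Z_T ∈ (0, ∞)`, and strictly positive normalized proposals
`q_1, …, q_T`.  Assume `Q_SMC · log Ẑ_SMC` is integrable with respect to
`μ^{⊗TK} ⊗ (counting measure on ancestor configurations)`.  Then
`P_SMC = Q_SMC · Ẑ_SMC / Z_T` is a probability density on the extended space, and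
`ELBO_SMC = ∑_a ∫ Q_SMC log Ẑ_SMC dμ^{⊗TK} = log Z_T - KL(Q_SMC ‖ P_SMC)`. -/
theorem elbo_smc_eq_log_marginal_likelihood_sub_KL
    {X : Type*} [MeasurableSpace X] (μ : Measure X) [SigmaFinite μ]
    (T K : ℕ) (hT : 1 ≤ T) (hK : 1 ≤ K)
    (γ q : (t : ℕ) → (Fin t → X) → ℝ) (Z : ℕ → ℝ)
    (hγ_meas : ∀ t, 1 ≤ t → t ≤ T → Measurable (γ t))
    (hγ_pos : ∀ t, 1 ≤ t → t ≤ T → ∀ v, 0 < γ t v)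
    (hγ_int : ∀ t, 1 ≤ t → t ≤ T → Integrable (γ t) (Measure.pi fun _ : Fin t => μ))
    (hZ_def : ∀ t, 1 ≤ t → t ≤ T →
      ∫ v, γ t v ∂(Measure.pi fun _ : Fin t => μ) = Z t)
    (hZ_pos : ∀ t, 1 ≤ t → t ≤ T → 0 < Z t)
    (hq_meas : ∀ t, 1 ≤ t → t ≤ T → Measurable (q t))
    (hq_pos : ∀ t, 1 ≤ t → t ≤ T → ∀ v, 0 < q t v)
    (hq_norm : ∀ t < T, ∀ vp : Fin t → X, ∫ y, q (t + 1) (Fin.snoc vp y) ∂μ = 1)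
    (hint : ∀ af : Fin (T - 1) → Fin K → Fin K,
      Integrable
        (fun xf : Fin T → Fin K → X =>
          smcQ γ q T K (extX hT xf) (extA af) *
            Real.log (smcZhat γ q T K (extX hT xf) (extA af)))
        (Measure.pi fun _ : Fin T => Measure.pi fun _ : Fin K => μ)) :
    (∑ af : Fin (T - 1) → Fin K → Fin K,
        ∫ xf : Fin T → Fin K → X,
          smcQ γ q T K (extX hT xf) (extA af) * smcZhat γ q T K (extX hT xf) (extA af) / Z T
          ∂(Measure.pi fun _ : Fin T => Measure.pi fun _ : Fin K => μ)
        = 1) ∧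
      (∑ af : Fin (T - 1) → Fin K → Fin K,
          ∫ xf : Fin T → Fin K → X,
            smcQ γ q T K (extX hT xf) (extA af) *
              Real.log (smcZhat γ q T K (extX hT xf) (extA af))
            ∂(Measure.pi fun _ : Fin T => Measure.pi fun _ : Fin K => μ)
        = Real.log (Z T)
          - ∑ af : Fin (T - 1) → Fin K → Fin K,
              ∫ xf : Fin T → Fin K → X,
                smcQ γ q T K (extX hT xf) (extA af) *
                  Real.log (smcQ γ q T K (extX hT xf) (extA af) /
                    (smcQ γ q T K (extX hT xf) (extA af) *
                      smcZhat γ q T K (extX hT xf) (extA af) / Z T))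
                ∂(Measure.pi fun _ : Fin T => Measure.pi fun _ : Fin K => μ)) := by
  obtain ⟨n, rfl⟩ : ∃ n, T = n + 1 := ⟨T - 1, by omega⟩
  have hK0 : K ≠ 0 := by omega
  have hZ := hZ_pos (n + 1) hT le_rfl
  obtain ⟨hQint, hQsum⟩ :=
    SMC.integrable_smcQ_and_sum_integral_smcQ hγ_pos hq_pos hγ_meas hq_meas hq_norm hK0 le_rfl
  have hQZsum := (SMC.sum_integral_smcQ_mul_smcZhat hγ_pos hq_pos hγ_meas hq_meas hq_norm hK0
    le_rfl (hγ_int _ hT le_rfl)).trans (hZ_def _ hT le_rfl)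
  refine ⟨?_, sum_integral_mul_log_eq_log_sub_sum_integral_mul_log_div
    (fun _ _ => (SMC.smcZhat_pos hγ_pos hq_pos hK0 le_rfl _ _).ne') hZ.ne' hQint hint hQsum⟩
  simp_rw [integral_div, ← Finset.sum_div, div_eq_one_iff_eq hZ.ne']
  exact hQZsum
end
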